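/- arXiv:0810.4389 — 7 statements merged into one kernel-verified Lean document; each statement's English description precedes it below -/
import Mathlib

section
/- The linking matrix of an n-component Gauss phrase is a homotopy invariant: if two n-component Gauss phrases are homotopic, then their linking matrices are equal. -/
/-- A word is a finite sequence of letters; we take the letters to be natural numbers. -/
abbrev Word := List ℕ

/-- An `n`-component phrase: an `n`-tuple of words. -/
abbrev Phrase (n : ℕ) := Fin n → Word

/-- The concatenation of all the components of a phrase. -/
def totalWord {n : ℕ} (p : Phrase n) : Word := (List.ofFn p).flatten

/-- A Gauss word: every letter that appears does so exactly twice. -/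
def IsGaussWord (w : Word) : Prop := ∀ a ∈ w, w.count a = 2

/-- A Gauss phrase: the concatenation of the components is a Gauss word. -/
def IsGaussPhrase {n : ℕ} (p : Phrase n) : Prop := IsGaussWord (totalWord p)

/-- The phrase written as a single word with separators (`none`) between components. -/
def sepWord {n : ℕ} (p : Phrase n) : List (Option ℕ) :=
  List.intercalate [none] (List.ofFn fun i => (p i).map some)

/-- A single open homotopy move: isomorphism, H1, H2 or H3.  Adjacency of two letters
in `sepWord p` means exactly that they are adjacent inside a single component. -/
inductive OpenMove {n : ℕ} : Phrase n → Phrase n → Prop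
  | iso (p : Phrase n) (f : ℕ → ℕ) (hf : Function.Bijective f) :
      OpenMove p (fun i => (p i).map f)
  | h1 (p q : Phrase n) (A : ℕ) (x y : List (Option ℕ))
      (hA : some A ∉ x ++ y)
      (hp : sepWord p = x ++ some A :: some A :: y)
      (hq : sepWord q = x ++ y) : OpenMove p q
  | h2 (p q : Phrase n) (A B : ℕ) (x y z : List (Option ℕ))
      (hAB : A ≠ B)
      (hA : some A ∉ x ++ y ++ z) (hB : some B ∉ x ++ y ++ z)
      (hp : sepWord p = x ++ some A :: some B :: (y ++ some B :: some A :: z))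
      (hq : sepWord q = x ++ y ++ z) : OpenMove p q
  | h3 (p q : Phrase n) (A B C : ℕ) (w x y z : List (Option ℕ))
      (hAB : A ≠ B) (hAC : A ≠ C) (hBC : B ≠ C)
      (hA : some A ∉ w ++ x ++ y ++ z) (hB : some B ∉ w ++ x ++ y ++ z)
      (hC : some C ∉ w ++ x ++ y ++ z)
      (hp : sepWord p =
        w ++ some A :: some B :: (x ++ some A :: some C :: (y ++ some B :: some C :: z)))
      (hq : sepWord q =
        w ++ some B :: some A :: (x ++ some C :: some A :: (y ++ some C :: some B :: z))) :
      OpenMove p q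

/-- The shift move: move the first letter of a component to its end. -/
inductive ShiftMove {n : ℕ} : Phrase n → Phrase n → Prop
  | shift (p : Phrase n) (k : Fin n) (A : ℕ) (y : Word) (hp : p k = A :: y) :
      ShiftMove p (Function.update p k (y ++ [A]))

/-- Open homotopy: the equivalence relation generated by isomorphisms and the
moves H1, H2, H3 (and their inverses). -/
def OpenHomotopic {n : ℕ} (p q : Phrase n) : Prop :=
  Relation.EqvGen (@OpenMove n) p q

/-- Homotopy: the equivalence relation generated by isomorphisms, shift moves and the
moves H1, H2, H3 (and their inverses). -/
def Homotopic {n : ℕ} (p q : Phrase n) : Prop :=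
  Relation.EqvGen (fun a b => OpenMove a b ∨ ShiftMove a b) p q

/-- The linking matrix of a phrase: the `(i,j)` entry, for `i ≠ j`, is the number
modulo 2 of (two-component) letters with one occurrence in component `i` and the
other occurrence in component `j`; the diagonal entries are `0`. -/
def linkingMatrix {n : ℕ} (p : Phrase n) : Matrix (Fin n) (Fin n) (ZMod 2) :=
  Matrix.of fun i j =>
    if i = j then 0
    else (((totalWord p).toFinset.filter
        fun a => (p i).count a = 1 ∧ (p j).count a = 1).card : ZMod 2)

/-- The subword strictly between the two occurrences of the letter `a` in `w`
(for a letter occurring exactly twice in `w`). -/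
def betweenWord (w : Word) (a : ℕ) : Word :=
  (w.drop (w.idxOf a + 1)).takeWhile fun b => b ≠ a

/-- Fukunaga's `T` invariant: `Tk p k` is the number, modulo 2, of odd-parity
single-component letters in the `k`-th component of `p`. -/
def Tk {n : ℕ} (p : Phrase n) (k : Fin n) : ZMod 2 :=
  (((p k).toFinset.filter
      fun a => (p k).count a = 2 ∧ Odd (betweenWord (p k) a).length).card : ZMod 2)

/-- The linking vector of a subword `w` of the `k`-th component of `p`: the `i`-th entry
is the number modulo 2 of letters occurring exactly once in `w` whose other occurrence
lies in the `i`-th component of `p`. -/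
def linkVec {n : ℕ} (p : Phrase n) (k : Fin n) (w : Word) : Fin n → ZMod 2 :=
  fun i =>
    ((w.toFinset.filter fun a => w.count a = 1 ∧
        (if i = k then (p k).count a = 2 else a ∈ p i)).card : ZMod 2)

/-- The linking vector of a single-component letter `a` of the `k`-th component:
the linking vector of the word between its two occurrences. -/
def letterVec {n : ℕ} (p : Phrase n) (k : Fin n) (a : ℕ) : Fin n → ZMod 2 :=
  linkVec p k (betweenWord (p k) a)

/-- `Bk p k`: the set of nonzero vectors `v ∈ (ℤ/2)ⁿ` which are the linking vector of an
odd number of single-component letters of the `k`-th component of `p`. -/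
def Bk {n : ℕ} (p : Phrase n) (k : Fin n) : Finset (Fin n → ZMod 2) :=
  Finset.univ.filter fun v => v ≠ 0 ∧
    Odd (((p k).toFinset.filter fun a => (p k).count a = 2 ∧ letterVec p k a = v).card)

/-- `Ok p k`: the set of orbits of `(ℤ/2)ⁿ` under translation by the linking vector of the
`k`-th component, other than the orbit of `0`, which contain the linking vector of an odd
number of single-component letters of the `k`-th component.  An orbit is recorded as the
finite set of its elements. -/
def Ok {n : ℕ} (p : Phrase n) (k : Fin n) : Finset (Finset (Fin n → ZMod 2)) :=
  Finset.univ.filter fun O =>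
    (∃ v : Fin n → ZMod 2, O = {v, v + linkVec p k (p k)}) ∧
    (0 : Fin n → ZMod 2) ∉ O ∧
    Odd (((p k).toFinset.filter fun a => (p k).count a = 2 ∧ letterVec p k a ∈ O).card)

/-!
The linking matrix only depends on the counts `(p i).count a`, which can be read off `sepWord p`
segment by segment.  H3 and shift moves only permute letters within a component, so they preserve
all counts; an isomorphism relabels them injectively.  H1 erases a letter occurring twice in one
component, which links nothing; H2 erases two letters `A`, `B` having the same count in every
component, so their contributions to each entry cancel modulo 2.
-/

/-- The number of occurrences of `some a` in the `i`-th `none`-separated segment of `l`. -/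
def segmentCount : List (Option ℕ) → ℕ → ℕ → ℕ
  | [], _, _ => 0
  | none :: _, 0, _ => 0
  | none :: l, i + 1, a => segmentCount l i a
  | some b :: l, i, a => (if i = 0 ∧ b = a then 1 else 0) + segmentCount l i a

lemma segmentCount_append (x l : List (Option ℕ)) (i a : ℕ) :
    segmentCount (x ++ l) i a =
      segmentCount x i a + if x.count none ≤ i then segmentCount l (i - x.count none) a else 0 := by
  induction x generalizing i with
  | nil => simp [segmentCount]
  | cons o x ih =>
    rcases o with _ | b
    · rcases i with _ | i
      · simp [segmentCount]
      · simp only [List.cons_append, segmentCount, ih, List.count_cons_self]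
        split_ifs <;> first | omega | (congr 2; omega)
    · simp [segmentCount, ih, add_assoc]

lemma segmentCount_eq_zero_of_notMem {a : ℕ} {l : List (Option ℕ)} (h : some a ∉ l) (i : ℕ) :
    segmentCount l i a = 0 := by
  induction l generalizing i with
  | nil => rfl
  | cons o l ih =>
    rw [List.mem_cons, not_or] at h
    rcases o with _ | b
    · rcases i with _ | i
      · rfl
      · exact ih h.2 i
    · simp only [segmentCount, ih h.2, add_zero, ite_eq_right_iff]
      rintro ⟨-, rfl⟩
      simp at h

lemma segmentCount_append_cons_of_ne {a b : ℕ} (hab : b ≠ a) (x l : List (Option ℕ)) (i : ℕ) :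
    segmentCount (x ++ some b :: l) i a = segmentCount (x ++ l) i a := by
  simp [segmentCount_append, segmentCount, hab]

lemma segmentCount_append_congr {l l' : List (Option ℕ)} (h : segmentCount l = segmentCount l')
    (x : List (Option ℕ)) : segmentCount (x ++ l) = segmentCount (x ++ l') := by
  funext i a
  rw [segmentCount_append, segmentCount_append, h]

lemma segmentCount_swap (b c : ℕ) (l : List (Option ℕ)) :
    segmentCount (some b :: some c :: l) = segmentCount (some c :: some b :: l) := by
  funext i a
  simp only [segmentCount]
  omega

lemma segmentCount_map_some (w : Word) (i a : ℕ) :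
    segmentCount (w.map some) i a = if i = 0 then w.count a else 0 := by
  induction w with
  | nil => simp [segmentCount]
  | cons b w ih =>
    simp only [List.map_cons, segmentCount, ih, List.count_cons, beq_iff_eq]
    split_ifs <;> omega

lemma segmentCount_intercalate (ws : List Word) (i : ℕ) (hi : i < ws.length) (a : ℕ) :
    segmentCount (List.intercalate [none] (ws.map (List.map some))) i a = ws[i].count a := by
  induction ws generalizing i with
  | nil => simp at hi
  | cons w ws ih =>
    rcases ws with _ | ⟨u, ws⟩
    · obtain rfl : i = 0 := by simpa using hi
      simp [segmentCount_map_some]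
    · simp only [List.map_cons, List.intercalate_cons_cons, List.append_assoc]
      rw [← List.map_cons, segmentCount_append, segmentCount_map_some]
      rcases i with _ | i
      · simp [segmentCount]
      · have hnone : (w.map some).count none = 0 := List.count_eq_zero.2 (by simp)
        simpa [hnone, segmentCount] using ih i (by simpa using hi)

lemma segmentCount_sepWord {n : ℕ} (p : Phrase n) (i : Fin n) (a : ℕ) :
    segmentCount (sepWord p) i a = (p i).count a := by
  have hmap : (List.ofFn fun k => (p k).map some) = (List.ofFn p).map (List.map some) := by
    rw [List.map_ofFn]; rfl
  rw [sepWord, hmap, segmentCount_intercalate _ i (by simp), List.getElem_ofFn]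

lemma mem_sepWord_of_mem {n : ℕ} {p : Phrase n} {i : Fin n} {a : ℕ} (h : a ∈ p i) :
    some a ∈ sepWord p := by
  by_contra h'
  have := segmentCount_eq_zero_of_notMem h' i
  rw [segmentCount_sepWord, List.count_eq_zero] at this
  exact this h

lemma mem_totalWord {n : ℕ} {p : Phrase n} {a : ℕ} : a ∈ totalWord p ↔ ∃ i, a ∈ p i := by
  simp [totalWord, List.mem_flatten, List.mem_ofFn]

lemma linkingMatrix_apply_eq_sum {n : ℕ} {p : Phrase n} {i j : Fin n} (hij : i ≠ j)
    {s : Finset ℕ} (hs : (totalWord p).toFinset ⊆ s) :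
    linkingMatrix p i j = ∑ a ∈ s, if (p i).count a = 1 ∧ (p j).count a = 1 then 1 else 0 := by
  rw [linkingMatrix, Matrix.of_apply, if_neg hij, Finset.natCast_card_filter]
  refine Finset.sum_subset hs fun a _ ha => if_neg ?_
  rintro ⟨hi, -⟩
  exact ha (List.mem_toFinset.2 (mem_totalWord.2 ⟨i, List.count_pos_iff.1 (by omega)⟩))

theorem linkingMatrix_eq_of_count_eq_off {n : ℕ} {p q : Phrase n} (E : Finset ℕ)
    (hcount : ∀ i, ∀ a ∉ E, (p i).count a = (q i).count a) (hq : ∀ i, ∀ a ∈ E, a ∉ q i)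
    (hp : ∀ i j, i ≠ j →
      ∑ a ∈ E, (if (p i).count a = 1 ∧ (p j).count a = 1 then 1 else 0 : ZMod 2) = 0) :
    linkingMatrix p = linkingMatrix q := by
  ext i j
  rcases eq_or_ne i j with rfl | hij
  · simp [linkingMatrix]
  set s := (totalWord p).toFinset ∪ (totalWord q).toFinset ∪ E
  have hE : E ⊆ s := Finset.subset_union_right
  have hqE : ∑ a ∈ E, (if (q i).count a = 1 ∧ (q j).count a = 1 then 1 else 0 : ZMod 2) = 0 :=
    Finset.sum_eq_zero fun a ha => if_neg fun h => hq i a ha (List.count_pos_iff.1 (by omega))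
  rw [linkingMatrix_apply_eq_sum hij (s := s) (by intro; simp +contextual [s]),
    linkingMatrix_apply_eq_sum hij (s := s) (by intro; simp +contextual [s]),
    ← Finset.sum_sdiff hE, ← Finset.sum_sdiff hE, hp i j hij, hqE]
  refine congrArg (· + 0) (Finset.sum_congr rfl fun a ha => ?_)
  have ha : a ∉ E := (Finset.mem_sdiff.1 ha).2
  rw [hcount i a ha, hcount j a ha]

theorem linkingMatrix_eq_of_count_eq {n : ℕ} {p q : Phrase n}
    (h : ∀ i a, (p i).count a = (q i).count a) : linkingMatrix p = linkingMatrix q :=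
  linkingMatrix_eq_of_count_eq_off ∅ (fun i a _ => h i a) (by simp) (by simp)

theorem linkingMatrix_map {n : ℕ} (p : Phrase n) {f : ℕ → ℕ} (hf : f.Injective) :
    linkingMatrix (fun i => (p i).map f) = linkingMatrix p := by
  ext i j
  rcases eq_or_ne i j with rfl | hij
  · simp [linkingMatrix]
  have hs : (totalWord fun i => (p i).map f).toFinset ⊆ (totalWord p).toFinset.image f := by
    intro a
    simp only [List.mem_toFinset, mem_totalWord, List.mem_map, Finset.mem_image]
    rintro ⟨k, b, hb, rfl⟩
    exact ⟨b, ⟨k, hb⟩, rfl⟩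
  rw [linkingMatrix_apply_eq_sum hij hs, linkingMatrix_apply_eq_sum hij subset_rfl,
    Finset.sum_image fun a _ b _ h => hf h]
  simp only [List.count_map_of_injective _ f hf]

theorem OpenMove.linkingMatrix_eq {n : ℕ} :
    ∀ {p q : Phrase n}, OpenMove p q → linkingMatrix p = linkingMatrix q
  | _, _, .iso p f hf => (linkingMatrix_map p hf.injective).symm
  | _, _, .h1 p q A x y hA hp hq => by
    have hAx : some A ∉ x := fun h => hA (List.mem_append_left y h)
    have hAy : some A ∉ y := fun h => hA (List.mem_append_right x h)
    refine linkingMatrix_eq_of_count_eq_off {A} (fun i a ha => ?_) (fun i a ha hmem => ?_)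
      fun i j _ => ?_
    · have hAa : A ≠ a := Ne.symm (by simpa using ha)
      rw [← segmentCount_sepWord, ← segmentCount_sepWord, hp, hq,
        segmentCount_append_cons_of_ne hAa, segmentCount_append_cons_of_ne hAa]
    · rw [Finset.mem_singleton.1 ha] at hmem
      exact hA (hq ▸ mem_sepWord_of_mem hmem)
    · -- the letter `A` occurs twice in one component and nowhere else
      rw [Finset.sum_singleton, if_neg]
      rintro ⟨hi, -⟩
      rw [← segmentCount_sepWord, hp] at hi
      simp only [segmentCount_append, segmentCount, segmentCount_eq_zero_of_notMem hAx,
        segmentCount_eq_zero_of_notMem hAy] at hi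
      split_ifs at hi <;> simp_all
  | _, _, .h2 p q A B x y z hAB hA hB hp hq => by
    simp only [List.mem_append, not_or] at hA hB
    have hcountAB : ∀ i, (p i).count A = (p i).count B := fun i => by
      rw [← segmentCount_sepWord, ← segmentCount_sepWord, hp]
      simp [segmentCount_append, segmentCount, segmentCount_eq_zero_of_notMem, hA, hB, hAB,
        hAB.symm]
    refine linkingMatrix_eq_of_count_eq_off {A, B} (fun i a ha => ?_)
      (fun i a ha hmem => ?_) fun i j _ => ?_
    · simp only [Finset.mem_insert, Finset.mem_singleton, not_or] at ha
      rw [← segmentCount_sepWord, ← segmentCount_sepWord, hp, hq,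
        segmentCount_append_cons_of_ne (Ne.symm ha.1),
        segmentCount_append_cons_of_ne (Ne.symm ha.2), ← List.append_assoc,
        segmentCount_append_cons_of_ne (Ne.symm ha.2),
        segmentCount_append_cons_of_ne (Ne.symm ha.1)]
    · have hmem' := hq ▸ mem_sepWord_of_mem hmem
      simp only [Finset.mem_insert, Finset.mem_singleton] at ha
      rcases ha with rfl | rfl <;> simp_all
    · rw [Finset.sum_pair hAB, hcountAB i, hcountAB j, CharTwo.add_self_eq_zero]
  | _, _, .h3 p q A B C w x y z _ _ _ _ _ _ hp hq => by
    have hseg : segmentCount (sepWord p) = segmentCount (sepWord q) := by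
      rw [hp, hq]
      refine segmentCount_append_congr ?_ w
      rw [segmentCount_swap]
      refine segmentCount_append_congr (segmentCount_append_congr ?_ x) [B, A]
      rw [segmentCount_swap]
      refine segmentCount_append_congr (segmentCount_append_congr ?_ y) [C, A]
      exact segmentCount_swap B C z
    exact linkingMatrix_eq_of_count_eq fun i a => by
      rw [← segmentCount_sepWord, ← segmentCount_sepWord, hseg]

theorem ShiftMove.linkingMatrix_eq {n : ℕ} :
    ∀ {p q : Phrase n}, ShiftMove p q → linkingMatrix p = linkingMatrix q
  | _, _, .shift p k A y hp => linkingMatrix_eq_of_count_eq fun i a => by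
    rcases eq_or_ne i k with rfl | hik
    · rw [Function.update_self, hp, (List.perm_append_singleton A y).count_eq]
    · rw [Function.update_of_ne hik]

theorem linkingMatrix_homotopy_invariant_general {n : ℕ} (p q : Phrase n)
    (h : Homotopic p q) :
    linkingMatrix p = linkingMatrix q :=
  (Setoid.ker linkingMatrix).iseqv.eqvGen_iff.mp <|
    h.mono fun _ _ hmove => hmove.elim OpenMove.linkingMatrix_eq ShiftMove.linkingMatrix_eq

/-- the linking matrix is a homotopy invariant. -/
theorem linkingMatrix_homotopy_invariant {n : ℕ} (p q : Phrase n)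
    (hp : IsGaussPhrase p) (hq : IsGaussPhrase q) (h : Homotopic p q) :
    linkingMatrix p = linkingMatrix q :=
  linkingMatrix_homotopy_invariant_general p q h
end

section
/- The vector T(p) = (T_1(p),…,T_n(p)) ∈ (Z/2)^n is an open homotopy invariant of n-component Gauss phrases: if two n-component Gauss phrases p and q are open homotopic, then T(p) = T(q). -/
section Word

variable {α : Type*} [DecidableEq α] {a b c : α} {s t r u v w m m' : List α}

/-- `betweenWord` and the odd-parity letters of `Tk`, over an arbitrary alphabet: the components
cut out of `sepWord` are words over `Option ℕ`. -/
def between (w : List α) (a : α) : List α :=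
  (w.drop (w.idxOf a + 1)).takeWhile fun b => b ≠ a

def oddLetters (w : List α) : Finset α :=
  w.toFinset.filter fun a => w.count a = 2 ∧ Odd (between w a).length

theorem between_append_cons_append_cons (hs : a ∉ s) (ht : a ∉ t) :
    between (s ++ a :: (t ++ a :: r)) a = t := by
  have e : s ++ a :: (t ++ a :: r) = (s ++ [a]) ++ (t ++ a :: r) := by simp
  rw [between, List.idxOf_append_of_notMem hs, List.idxOf_cons_self, e, List.drop_left' (by simp),
    List.takeWhile_append_of_pos (by simpa using fun b hb => ne_of_mem_of_not_mem hb ht)]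
  simp

theorem exists_eq_append_cons_of_count_eq_one (h : w.count a = 1) :
    ∃ s t, w = s ++ a :: t ∧ a ∉ s ∧ a ∉ t := by
  obtain ⟨s, t, rfl, hs⟩ :=
    List.eq_append_cons_of_mem (List.count_pos_iff.mp (show 0 < w.count a by omega))
  refine ⟨s, t, rfl, hs, List.count_eq_zero.mp ?_⟩
  simpa [List.count_append, List.count_eq_zero.mpr hs] using h

theorem exists_eq_append_cons_append_cons_of_count_eq_two (h : w.count a = 2) :
    ∃ s t r, w = s ++ a :: (t ++ a :: r) ∧ a ∉ s ∧ a ∉ t ∧ a ∉ r := by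
  obtain ⟨s, x, rfl, hs⟩ :=
    List.eq_append_cons_of_mem (List.count_pos_iff.mp (show 0 < w.count a by omega))
  have hx : x.count a = 1 := by simpa [List.count_append, List.count_eq_zero.mpr hs] using h
  obtain ⟨t, r, rfl, ht, hr⟩ := exists_eq_append_cons_of_count_eq_one hx
  exact ⟨s, t, r, rfl, hs, ht, hr⟩

theorem mem_oddLetters : a ∈ oddLetters w ↔ w.count a = 2 ∧ Odd (between w a).length := by
  rw [oddLetters, Finset.mem_filter, List.mem_toFinset, and_iff_right_iff_imp]
  exact fun h => List.count_pos_iff.mp (by omega)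

theorem mem_of_mem_oddLetters (h : a ∈ oddLetters w) : a ∈ w :=
  List.mem_toFinset.mp (Finset.mem_filter.mp h).1

theorem notMem_oddLetters_of_count_ne_two (h : w.count a ≠ 2) : a ∉ oddLetters w :=
  fun ha => h (mem_oddLetters.mp ha).1

theorem mem_oddLetters_append_cons_append_cons (hs : a ∉ s) (ht : a ∉ t) (hr : a ∉ r) :
    a ∈ oddLetters (s ++ a :: (t ++ a :: r)) ↔ Odd t.length := by
  simp [mem_oddLetters, between_append_cons_append_cons hs ht, List.count_append,
    List.count_eq_zero.mpr, hs, ht, hr]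

theorem mem_oddLetters_append_append_iff_of_modEq (hm : c ∉ m) (hm' : c ∉ m')
    (hlen : m.length ≡ m'.length [MOD 2]) :
    c ∈ oddLetters (u ++ m ++ v) ↔ c ∈ oddLetters (u ++ m' ++ v) := by
  have hcount : ∀ m, c ∉ m → (u ++ m ++ v).count c = u.count c + v.count c := fun m hm => by
    simp [List.count_append, List.count_eq_zero.mpr hm]
  by_cases h2 : u.count c + v.count c = 2
  swap
  · exact iff_of_false (notMem_oddLetters_of_count_ne_two (by rwa [hcount m hm]))
      (notMem_oddLetters_of_count_ne_two (by rwa [hcount m' hm']))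
  obtain hu | hu | hu : u.count c = 0 ∨ u.count c = 1 ∨ u.count c = 2 := by omega
  · obtain ⟨s, t, r, rfl, hs, ht, hr⟩ :=
      exists_eq_append_cons_append_cons_of_count_eq_two (show v.count c = 2 by omega)
    have hu : c ∉ u := List.count_eq_zero.mp hu
    have e : ∀ m : List α,
        u ++ m ++ (s ++ c :: (t ++ c :: r)) = u ++ m ++ s ++ c :: (t ++ c :: r) := by
      simp
    rw [e, e, mem_oddLetters_append_cons_append_cons (by simp [*]) ht hr,
      mem_oddLetters_append_cons_append_cons (by simp [*]) ht hr]
  · obtain ⟨s, t, rfl, hs, ht⟩ := exists_eq_append_cons_of_count_eq_one hu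
    obtain ⟨s', t', rfl, hs', ht'⟩ :=
      exists_eq_append_cons_of_count_eq_one (show v.count c = 1 by omega)
    have e : ∀ m : List α,
        s ++ c :: t ++ m ++ (s' ++ c :: t') = s ++ c :: (t ++ m ++ s' ++ c :: t') := by
      simp
    rw [e, e, mem_oddLetters_append_cons_append_cons hs (by simp [*]) ht',
      mem_oddLetters_append_cons_append_cons hs (by simp [*]) ht']
    simp only [List.length_append, Nat.odd_iff]
    unfold Nat.ModEq at hlen
    omega
  · obtain ⟨s, t, r, rfl, hs, ht, hr⟩ := exists_eq_append_cons_append_cons_of_count_eq_two hu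
    have hv : c ∉ v := List.count_eq_zero.mp (by omega)
    simp only [List.append_assoc, List.cons_append]
    rw [mem_oddLetters_append_cons_append_cons hs ht (by simp [*]),
      mem_oddLetters_append_cons_append_cons hs ht (by simp [*])]

theorem mem_oddLetters_map {β : Type*} [DecidableEq β] {f : α → β} (hf : Function.Injective f) :
    f a ∈ oddLetters (w.map f) ↔ a ∈ oddLetters w := by
  by_cases h : w.count a = 2
  · obtain ⟨s, t, r, rfl, hs, ht, hr⟩ := exists_eq_append_cons_append_cons_of_count_eq_two h
    have hnot : ∀ {l : List α}, a ∉ l → f a ∉ l.map f :=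
      fun hl => (List.mem_map_of_injective hf).not.mpr hl
    simp only [List.map_append, List.map_cons]
    rw [mem_oddLetters_append_cons_append_cons (hnot hs) (hnot ht) (hnot hr),
      mem_oddLetters_append_cons_append_cons hs ht hr, List.length_map]
  · refine iff_of_false (notMem_oddLetters_of_count_ne_two ?_)
      (notMem_oddLetters_of_count_ne_two h)
    rwa [List.count_map_of_injective _ _ hf]

theorem card_oddLetters_map {β : Type*} [DecidableEq β] {f : α → β} (hf : Function.Injective f)
    (w : List α) : (oddLetters (w.map f)).card = (oddLetters w).card := by
  have : oddLetters (w.map f) = (oddLetters w).map ⟨f, hf⟩ := by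
    ext b
    simp only [Finset.mem_map, Function.Embedding.coeFn_mk]
    constructor
    · intro hb
      obtain ⟨a, -, rfl⟩ := List.mem_map.mp (mem_of_mem_oddLetters hb)
      exact ⟨a, (mem_oddLetters_map hf).mp hb, rfl⟩
    · rintro ⟨a, ha, rfl⟩
      exact (mem_oddLetters_map hf).mpr ha
  rw [this, Finset.card_map]

theorem mem_oddLetters_append_append_of_notMem (hu : c ∉ u) (hv : c ∉ v) :
    c ∈ oddLetters (u ++ m ++ v) ↔ c ∈ oddLetters m := by
  by_cases h : m.count c = 2
  · obtain ⟨s, t, r, rfl, hs, ht, hr⟩ := exists_eq_append_cons_append_cons_of_count_eq_two h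
    rw [show u ++ (s ++ c :: (t ++ c :: r)) ++ v = (u ++ s) ++ c :: (t ++ c :: (r ++ v)) by simp,
      mem_oddLetters_append_cons_append_cons (by simp [*]) ht (by simp [*]),
      mem_oddLetters_append_cons_append_cons hs ht hr]
  · refine iff_of_false (notMem_oddLetters_of_count_ne_two ?_)
      (notMem_oddLetters_of_count_ne_two h)
    simpa [List.count_append, List.count_eq_zero.mpr hu, List.count_eq_zero.mpr hv] using h

theorem oddLetters_append_append_of_disjoint (hm : Even m.length)
    (hdisj : ∀ c ∈ m, c ∉ u ∧ c ∉ v) :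
    oddLetters (u ++ m ++ v) = oddLetters (u ++ v) ∪ oddLetters m := by
  ext c
  rw [Finset.mem_union]
  by_cases hc : c ∈ m
  · obtain ⟨hu, hv⟩ := hdisj c hc
    have : c ∉ oddLetters (u ++ v) := fun h => by simpa [hu, hv] using mem_of_mem_oddLetters h
    rw [mem_oddLetters_append_append_of_notMem hu hv]
    tauto
  · have hm' : c ∉ oddLetters m := fun h => hc (mem_of_mem_oddLetters h)
    have := mem_oddLetters_append_append_iff_of_modEq (u := u) (v := v) (m' := []) hc
      List.not_mem_nil (by simpa [Nat.ModEq, Nat.even_iff] using hm)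
    rw [List.append_nil] at this
    rw [this]
    tauto

theorem oddLetters_append_cons_cons_self (ha : a ∉ u ++ v) :
    oddLetters (u ++ a :: a :: v) = oddLetters (u ++ v) := by
  have hdisj : ∀ c ∈ [a, a], c ∉ u ∧ c ∉ v := by simpa using ha
  rw [show u ++ a :: a :: v = u ++ [a, a] ++ v by simp,
    oddLetters_append_append_of_disjoint (by simp) hdisj,
    show oddLetters [a, a] = ∅ by simp [oddLetters, between], Finset.union_empty]

theorem oddLetters_append_cons_cons_of_notMem (hab : a ≠ b) (ha : a ∉ u ++ v) (hb : b ∉ u ++ v) :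
    oddLetters (u ++ a :: b :: v) = oddLetters (u ++ v) := by
  have hdisj : ∀ c ∈ [a, b], c ∉ u ∧ c ∉ v := by simp_all
  rw [show u ++ a :: b :: v = u ++ [a, b] ++ v by simp,
    oddLetters_append_append_of_disjoint (by simp) hdisj,
    show oddLetters [a, b] = ∅ by simp [oddLetters, between, hab, hab.symm], Finset.union_empty]

theorem card_oddLetters_append_cons_cons_append_cons_cons (hab : a ≠ b) (ha : a ∉ u ++ w ++ v)
    (hb : b ∉ u ++ w ++ v) :
    ((oddLetters (u ++ a :: b :: (w ++ b :: a :: v))).card : ZMod 2) =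
      (oddLetters (u ++ w ++ v)).card := by
  have hGa : a ∉ oddLetters (u ++ w ++ v) := fun h => ha (mem_of_mem_oddLetters h)
  have hGb : b ∉ oddLetters (u ++ w ++ v) := fun h => hb (mem_of_mem_oddLetters h)
  simp only [List.mem_append, not_or] at ha hb
  have hmem_a : a ∈ oddLetters (u ++ a :: b :: (w ++ b :: a :: v)) ↔ Odd w.length := by
    rw [show u ++ a :: b :: (w ++ b :: a :: v) = u ++ a :: ((b :: w ++ [b]) ++ a :: v) by simp,
      mem_oddLetters_append_cons_append_cons ha.1.1 (by simp [ha, hab]) ha.2]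
    simp [Nat.odd_add_one, ← Nat.not_even_iff_odd]
  have hmem_b : b ∈ oddLetters (u ++ a :: b :: (w ++ b :: a :: v)) ↔ Odd w.length := by
    rw [show u ++ a :: b :: (w ++ b :: a :: v) = (u ++ [a]) ++ b :: (w ++ b :: a :: v) by simp,
      mem_oddLetters_append_cons_append_cons (by simp [hb, hab.symm]) hb.1.2
        (by simp [hb, hab.symm])]
  have hother : ∀ c, c ≠ a → c ≠ b → (c ∈ oddLetters (u ++ a :: b :: (w ++ b :: a :: v)) ↔
      c ∈ oddLetters (u ++ w ++ v)) := by
    intro c hca hcb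
    have h₁ := mem_oddLetters_append_append_iff_of_modEq (c := c) (u := u)
      (v := w ++ [b, a] ++ v) (m := [a, b]) (m' := []) (by simp [hca, hcb]) List.not_mem_nil
      (by simp [Nat.ModEq])
    have h₂ := mem_oddLetters_append_append_iff_of_modEq (c := c) (u := u ++ w) (v := v)
      (m := [b, a]) (m' := []) (by simp [hca, hcb]) List.not_mem_nil (by simp [Nat.ModEq])
    simp only [List.append_nil, List.append_assoc, List.cons_append, List.nil_append] at h₁ h₂
    rw [h₁, h₂, List.append_assoc]
  by_cases hw : Odd w.length
  · have hF : oddLetters (u ++ a :: b :: (w ++ b :: a :: v)) =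
        insert a (insert b (oddLetters (u ++ w ++ v))) := by
      ext c
      by_cases hca : c = a
      · rw [hca]; simpa [hmem_a] using hw
      by_cases hcb : c = b
      · rw [hcb]; simpa [hmem_b] using hw
      simp [hother c hca hcb, hca, hcb]
    rw [hF, Finset.card_insert_of_notMem (by rw [Finset.mem_insert, not_or]; exact ⟨hab, hGa⟩),
      Finset.card_insert_of_notMem hGb]
    push_cast
    rw [add_assoc, CharTwo.add_self_eq_zero, add_zero]
  · congr 2
    ext c
    by_cases hca : c = a
    · rw [hca]; exact iff_of_false (by rwa [hmem_a]) hGa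
    by_cases hcb : c = b
    · rw [hcb]; exact iff_of_false (by rwa [hmem_b]) hGb
    exact hother c hca hcb

theorem count_append_cons_cons_comm (u v : List α) (a b c : α) :
    (u ++ b :: a :: v).count c = (u ++ a :: b :: v).count c :=
  ((List.Perm.swap a b v).append_left u).count_eq c

theorem mem_oddLetters_swap_iff (hab : a ≠ b) :
    a ∈ oddLetters (u ++ b :: a :: v) ↔
      (u ++ a :: b :: v).count a = 2 ∧ a ∉ oddLetters (u ++ a :: b :: v) := by
  by_cases h : (u ++ a :: b :: v).count a = 2
  · simp only [h, true_and]
    have h' : u.count a + v.count a = 1 := by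
      simp [List.count_append, hab.symm] at h
      omega
    obtain hu | hv : u.count a = 1 ∧ v.count a = 0 ∨ u.count a = 0 ∧ v.count a = 1 := by omega
    · obtain ⟨s, t, rfl, hs, ht⟩ := exists_eq_append_cons_of_count_eq_one hu.1
      have hv : a ∉ v := List.count_eq_zero.mp hu.2
      rw [show s ++ a :: t ++ b :: a :: v = s ++ a :: ((t ++ [b]) ++ a :: v) by simp,
        show s ++ a :: t ++ a :: b :: v = s ++ a :: (t ++ a :: (b :: v)) by simp,
        mem_oddLetters_append_cons_append_cons hs (by simp [ht, hab]) hv,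
        mem_oddLetters_append_cons_append_cons hs ht (by simp [hv, hab])]
      simp [Nat.odd_add_one]
    · obtain ⟨s, t, rfl, hs, ht⟩ := exists_eq_append_cons_of_count_eq_one hv.2
      have hu : a ∉ u := List.count_eq_zero.mp hv.1
      rw [show u ++ b :: a :: (s ++ a :: t) = (u ++ [b]) ++ a :: (s ++ a :: t) by simp,
        show u ++ a :: b :: (s ++ a :: t) = u ++ a :: ((b :: s) ++ a :: t) by simp,
        mem_oddLetters_append_cons_append_cons (by simp [hu, hab]) hs ht,
        mem_oddLetters_append_cons_append_cons hu (by simp [hs, hab]) ht]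
      simp [Nat.odd_add_one]
  · simp only [h, false_and, iff_false]
    exact notMem_oddLetters_of_count_ne_two (by rwa [count_append_cons_cons_comm])

theorem oddLetters_swap (hab : a ≠ b) :
    oddLetters (u ++ b :: a :: v) = symmDiff (oddLetters (u ++ a :: b :: v))
      (({a, b} : Finset α).filter fun c => (u ++ a :: b :: v).count c = 2) := by
  ext c
  rw [Finset.mem_symmDiff, Finset.mem_filter, Finset.mem_insert, Finset.mem_singleton]
  by_cases hca : c = a
  · have hcount := fun h => (mem_oddLetters (a := a) (w := u ++ a :: b :: v)).mp h |>.1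
    rw [hca, mem_oddLetters_swap_iff hab]
    tauto
  by_cases hcb : c = b
  · have := mem_oddLetters_swap_iff (u := u) (v := v) hab.symm
    have hcount := fun h => (mem_oddLetters (a := b) (w := u ++ b :: a :: v)).mp h |>.1
    rw [count_append_cons_cons_comm] at this hcount
    rw [hcb]
    tauto
  · have := mem_oddLetters_append_append_iff_of_modEq (c := c) (u := u) (v := v) (m := [b, a])
      (m' := [a, b]) (by simp [hca, hcb]) (by simp [hca, hcb]) rfl
    simp only [List.append_assoc, List.cons_append, List.nil_append] at this
    simp [this, hca, hcb]

theorem oddLetters_swap_of_notMem (hab : a ≠ b) (ha : a ∉ u ++ v) (hb : b ∉ u ++ v) :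
    oddLetters (u ++ b :: a :: v) = oddLetters (u ++ a :: b :: v) := by
  simp only [List.mem_append, not_or] at ha hb
  rw [oddLetters_swap hab, Finset.filter_false_of_mem, ← Finset.bot_eq_empty, symmDiff_bot]
  simp [List.count_append, List.count_eq_zero.mpr, ha, hb, hab]

theorem oddLetters_swap_swap (hab : a ≠ b) (hac : a ≠ c) (hbc : b ≠ c)
    (ha : a ∉ u ++ w ++ v) (hb : b ∉ u ++ w ++ v) (hc : c ∉ u ++ w ++ v) :
    oddLetters (u ++ c :: a :: (w ++ c :: b :: v)) =
      oddLetters (u ++ a :: c :: (w ++ b :: c :: v)) := by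
  simp only [List.mem_append, not_or] at ha hb hc
  have h₁ := oddLetters_swap (u := u) (v := w ++ c :: b :: v) hac
  have h₂ := oddLetters_swap (u := u ++ a :: c :: w) (v := v) hbc
  simp only [List.append_assoc, List.cons_append] at h₂
  rw [h₁, h₂]
  simp [Finset.filter_insert, Finset.filter_singleton, List.count_cons, List.count_append,
    List.count_eq_zero.mpr, ha, hb, hc, hab, hac, hbc, hab.symm, hac.symm, hbc.symm]

theorem oddLetters_swap_swap_swap (hab : a ≠ b) (hac : a ≠ c) (hbc : b ≠ c)
    (ha : a ∉ u ++ w ++ m ++ v) (hb : b ∉ u ++ w ++ m ++ v) (hc : c ∉ u ++ w ++ m ++ v) :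
    oddLetters (u ++ b :: a :: (w ++ c :: a :: (m ++ c :: b :: v))) =
      oddLetters (u ++ a :: b :: (w ++ a :: c :: (m ++ b :: c :: v))) := by
  simp only [List.mem_append, not_or] at ha hb hc
  have h₁ := oddLetters_swap (u := u) (v := w ++ c :: a :: (m ++ c :: b :: v)) hab
  have h₂ := oddLetters_swap (u := u ++ a :: b :: w) (v := m ++ c :: b :: v) hac
  have h₃ := oddLetters_swap (u := u ++ a :: b :: (w ++ a :: c :: m)) (v := v) hbc
  simp only [List.append_assoc, List.cons_append] at h₂ h₃
  rw [h₁, h₂, h₃]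
  simp only [Finset.filter_insert, Finset.filter_singleton, List.count_cons, List.count_append,
    beq_iff_eq, List.count_eq_zero.mpr, ha, hb, hc, hab, hac, hbc, hab.symm, hac.symm, hbc.symm,
    not_false_eq_true, ↓reduceIte, add_zero, zero_add, Nat.reduceAdd]
  have hS : symmDiff ({b, c} : Finset α) (symmDiff {a, c} {a, b}) = ⊥ := by
    ext x
    simp only [Finset.mem_symmDiff, Finset.mem_insert, Finset.mem_singleton, Finset.bot_eq_empty,
      Finset.notMem_empty, iff_false]
    grind
  rw [symmDiff_assoc, symmDiff_assoc, hS, symmDiff_bot]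

end Word

namespace List

variable {β : Type*} [BEq β] {sep : β} {x y m l u v : List β} {D E : List (List β)}

theorem splitOn_append_of_eq (hx : x.splitOn sep = D ++ [u]) (hy : y.splitOn sep = v :: E) :
    (x ++ y).splitOn sep = D ++ (u ++ v) :: E := by
  induction x generalizing D u with
  | nil =>
    rw [splitOn_nil] at hx
    obtain ⟨rfl, h⟩ := append_inj' (s₁ := []) hx rfl
    obtain rfl := singleton_inj.mp h
    simpa using hy
  | cons c x ih =>
    obtain ⟨D', u', hx'⟩ : ∃ D' u', x.splitOn sep = D' ++ [u'] :=
      ⟨_, _, (dropLast_append_getLast (splitOn_ne_nil sep x)).symm⟩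
    rw [cons_append, splitOn_cons_eq_if_modifyHead, ih hx']
    rw [splitOn_cons_eq_if_modifyHead, hx'] at hx
    split_ifs at hx ⊢
    · obtain ⟨rfl, h⟩ := append_inj' (s₁ := [] :: D') hx rfl
      obtain rfl := singleton_inj.mp h
      rfl
    · cases D' with
      | nil =>
        obtain ⟨rfl, h⟩ := append_inj' (s₁ := []) hx rfl
        obtain rfl := singleton_inj.mp h
        rfl
      | cons d D' =>
        obtain ⟨rfl, h⟩ := append_inj' (s₁ := (c :: d) :: D') hx rfl
        obtain rfl := singleton_inj.mp h
        rfl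

theorem subset_of_mem_splitOn (h : l ∈ x.splitOn sep) : l ⊆ x := by
  induction x generalizing l with
  | nil => simp_all
  | cons c x ih =>
    rw [splitOn_cons_eq_if_modifyHead] at h
    split_ifs at h
    · rcases mem_cons.mp h with rfl | h
      · exact nil_subset _
      · exact fun b hb => mem_cons_of_mem _ (ih h hb)
    · obtain ⟨l₀, L, hL⟩ := exists_cons_of_ne_nil (splitOn_ne_nil sep x)
      rw [hL, modifyHead_cons] at h
      rcases mem_cons.mp h with rfl | h
      · exact cons_subset_cons _ (ih (hL ▸ mem_cons_self))
      · exact fun b hb => mem_cons_of_mem _ (ih (hL ▸ mem_cons_of_mem _ h) hb)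

theorem splitOn_append_append [LawfulBEq β] (hm : sep ∉ m) (hx : x.splitOn sep = D ++ [u])
    (hy : y.splitOn sep = v :: E) : (x ++ m ++ y).splitOn sep = D ++ (u ++ m ++ v) :: E := by
  have hxm := splitOn_append_of_eq (y := m) hx (splitOn_eq_singleton hm)
  rw [splitOn_append_of_eq hxm hy]

theorem exists_splitOn_eq_append_singleton (sep : β) (x : List β) :
    ∃ D u, x.splitOn sep = D ++ [u] ∧ u ⊆ x :=
  ⟨_, _, (dropLast_append_getLast (splitOn_ne_nil sep x)).symm,
    subset_of_mem_splitOn (getLast_mem (splitOn_ne_nil sep x))⟩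

theorem exists_splitOn_eq_cons (sep : β) (y : List β) :
    ∃ v E, y.splitOn sep = v :: E ∧ v ⊆ y := by
  obtain ⟨v, E, h⟩ := exists_cons_of_ne_nil (splitOn_ne_nil sep y)
  exact ⟨v, E, h, subset_of_mem_splitOn (h ▸ mem_cons_self)⟩

theorem splitOn_eq_singleton_or (sep : β) (y : List β) :
    (∃ v, y.splitOn sep = [v] ∧ v ⊆ y) ∨
      ∃ v F w, y.splitOn sep = (v :: F) ++ [w] ∧ v ⊆ y ∧ w ⊆ y := by
  obtain ⟨v, E, h, hv⟩ := exists_splitOn_eq_cons sep y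
  rcases eq_nil_or_concat E with rfl | ⟨F, w, rfl⟩
  · exact .inl ⟨v, h, hv⟩
  · rw [concat_eq_append] at h
    exact .inr ⟨v, F, w, h, hv, subset_of_mem_splitOn (sep := sep) (by simp [h])⟩

end List

section Phrase

open List

def componentParities (s : List (Option ℕ)) : List (ZMod 2) :=
  (s.splitOn none).map fun w => ((oddLetters w).card : ZMod 2)

theorem Tk_eq_card_oddLetters {n : ℕ} (p : Phrase n) (k : Fin n) :
    Tk p k = ((oddLetters (p k)).card : ZMod 2) :=
  rfl

theorem componentParities_sepWord {n : ℕ} (hn : n ≠ 0) (p : Phrase n) :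
    componentParities (sepWord p) = ofFn (Tk p) := by
  rw [componentParities, sepWord, splitOn_intercalate none (by simp [mem_ofFn]) (by simpa using hn),
    map_ofFn]
  exact congrArg ofFn <| funext fun k => by
    rw [Tk_eq_card_oddLetters, Function.comp_apply, card_oddLetters_map (Option.some_injective ℕ)]

theorem Tk_eq_of_componentParities_eq {n : ℕ} {p q : Phrase n}
    (h : componentParities (sepWord p) = componentParities (sepWord q)) (k : Fin n) :
    Tk p k = Tk q k := by
  rw [componentParities_sepWord k.pos.ne', componentParities_sepWord k.pos.ne'] at h
  exact congrFun (ofFn_injective h) k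

variable {x y z w u v : List (Option ℕ)} {D E : List (List (Option ℕ))} {A B C : ℕ}

-- Stated for `m.map some` so that it rewrites without a side condition `none ∉ m`.
theorem splitOn_none_append_map_some_append {m : List ℕ} (hx : x.splitOn none = D ++ [u])
    (hy : y.splitOn none = v :: E) :
    (x ++ m.map some ++ y).splitOn none = D ++ (u ++ m.map some ++ v) :: E :=
  splitOn_append_append (by simp) hx hy

theorem componentParities_h1 (hA : some A ∉ x ++ y) :
    componentParities (x ++ some A :: some A :: y) = componentParities (x ++ y) := by
  obtain ⟨D, u, hx, hu⟩ := exists_splitOn_eq_append_singleton none x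
  obtain ⟨v, E, hy, hv⟩ := exists_splitOn_eq_cons none y
  rw [show x ++ some A :: some A :: y = x ++ [A, A].map some ++ y by simp,
    show x ++ y = x ++ [].map some ++ y by simp, componentParities, componentParities]
  simp only [splitOn_none_append_map_some_append hx hy]
  simp only [map_append, map_cons, map_nil, append_assoc, cons_append, nil_append, append_nil]
  rw [oddLetters_append_cons_cons_self (by grind)]

theorem componentParities_h2 (hAB : A ≠ B) (hA : some A ∉ x ++ y ++ z)
    (hB : some B ∉ x ++ y ++ z) :
    componentParities (x ++ some A :: some B :: (y ++ some B :: some A :: z)) =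
      componentParities (x ++ y ++ z) := by
  obtain ⟨D, u, hx, hu⟩ := exists_splitOn_eq_append_singleton none x
  obtain ⟨w, E, hz, hw⟩ := exists_splitOn_eq_cons none z
  have hAB' : some A ≠ some B := by simpa
  rw [show x ++ some A :: some B :: (y ++ some B :: some A :: z) =
      x ++ [A, B].map some ++ (y ++ [B, A].map some ++ z) by simp,
    show x ++ y ++ z = x ++ [].map some ++ (y ++ [].map some ++ z) by simp,
    componentParities, componentParities]
  rcases splitOn_eq_singleton_or none y with ⟨v, hy, hv⟩ | ⟨v₁, F, v₂, hy, hv₁, hv₂⟩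
  · simp only [splitOn_none_append_map_some_append hx <|
        splitOn_none_append_map_some_append (D := []) hy hz]
    simp only [map_append, map_cons, map_nil, append_assoc, cons_append, nil_append, append_nil]
    rw [card_oddLetters_append_cons_cons_append_cons_cons hAB' (by grind) (by grind), append_assoc]
  · simp only [splitOn_none_append_map_some_append hx <| splitOn_none_append_map_some_append hy hz]
    simp only [map_append, map_cons, map_nil, append_assoc, cons_append, nil_append, append_nil,
      append_eq]
    rw [oddLetters_append_cons_cons_of_notMem hAB' (by grind) (by grind),
      oddLetters_append_cons_cons_of_notMem hAB'.symm (by grind) (by grind)]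

theorem componentParities_h3 (hAB : A ≠ B) (hAC : A ≠ C) (hBC : B ≠ C)
    (hA : some A ∉ w ++ x ++ y ++ z) (hB : some B ∉ w ++ x ++ y ++ z)
    (hC : some C ∉ w ++ x ++ y ++ z) :
    componentParities
        (w ++ some A :: some B :: (x ++ some A :: some C :: (y ++ some B :: some C :: z))) =
      componentParities
        (w ++ some B :: some A :: (x ++ some C :: some A :: (y ++ some C :: some B :: z))) := by
  obtain ⟨D, u, hw, hu⟩ := exists_splitOn_eq_append_singleton none w
  obtain ⟨v, E, hz, hv⟩ := exists_splitOn_eq_cons none z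
  have hAB' : some A ≠ some B := by simpa
  have hAC' : some A ≠ some C := by simpa
  have hBC' : some B ≠ some C := by simpa
  have e : ∀ a b c d f g : ℕ,
      w ++ some a :: some b :: (x ++ some c :: some d :: (y ++ some f :: some g :: z)) =
        w ++ [a, b].map some ++ (x ++ [c, d].map some ++ (y ++ [f, g].map some ++ z)) := by
    simp
  simp only [componentParities, e]
  rcases splitOn_eq_singleton_or none x with ⟨x₀, hx, hx₀⟩ | ⟨x₁, F, x₂, hx, hx₁, hx₂⟩ <;>
  rcases splitOn_eq_singleton_or none y with ⟨y₀, hy, hy₀⟩ | ⟨y₁, G, y₂, hy, hy₁, hy₂⟩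
  · simp only [splitOn_none_append_map_some_append hw <|
      splitOn_none_append_map_some_append (D := []) hx <|
        splitOn_none_append_map_some_append (D := []) hy hz]
    simp only [map_append, map_cons, map_nil, append_assoc, cons_append, nil_append]
    rw [oddLetters_swap_swap_swap hAB' hAC' hBC' (by grind) (by grind) (by grind)]
  · simp only [splitOn_none_append_map_some_append hw <|
      splitOn_none_append_map_some_append (D := []) hx <|
        splitOn_none_append_map_some_append hy hz]
    simp only [map_append, map_cons, map_nil, append_assoc, cons_append, nil_append, append_eq]
    rw [oddLetters_swap_swap hBC' hAB'.symm hAC'.symm (by grind) (by grind) (by grind),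
      oddLetters_swap_of_notMem hBC' (by grind) (by grind)]
  · simp only [splitOn_none_append_map_some_append hw <|
      splitOn_none_append_map_some_append hx <|
        splitOn_none_append_map_some_append (D := []) hy hz]
    simp only [map_append, map_cons, map_nil, append_assoc, cons_append, nil_append, append_eq]
    rw [oddLetters_swap_of_notMem hAB' (by grind) (by grind),
      oddLetters_swap_swap hAB' hAC' hBC' (by grind) (by grind) (by grind)]
  · simp only [splitOn_none_append_map_some_append hw <|
      splitOn_none_append_map_some_append hx <| splitOn_none_append_map_some_append hy hz]
    simp only [map_append, map_cons, map_nil, append_assoc, cons_append, nil_append, append_eq]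
    rw [oddLetters_swap_of_notMem hAB' (by grind) (by grind),
      oddLetters_swap_of_notMem hAC' (by grind) (by grind),
      oddLetters_swap_of_notMem hBC' (by grind) (by grind)]

theorem OpenMove.Tk_eq {n : ℕ} {p q : Phrase n} (h : OpenMove p q) (k : Fin n) :
    Tk p k = Tk q k := by
  cases h with
  | iso f hf =>
    rw [Tk_eq_card_oddLetters, Tk_eq_card_oddLetters, card_oddLetters_map hf.injective]
  | h1 q A x y hA hp hq =>
    exact Tk_eq_of_componentParities_eq (by rw [hp, hq, componentParities_h1 hA]) k
  | h2 q A B x y z hAB hA hB hp hq =>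
    exact Tk_eq_of_componentParities_eq (by rw [hp, hq, componentParities_h2 hAB hA hB]) k
  | h3 q A B C w x y z hAB hAC hBC hA hB hC hp hq =>
    exact Tk_eq_of_componentParities_eq
      (by rw [hp, hq, componentParities_h3 hAB hAC hBC hA hB hC]) k

end Phrase

theorem T_open_homotopy_invariant_general {n : ℕ} (p q : Phrase n) (h : OpenHomotopic p q) :
    ∀ k : Fin n, Tk p k = Tk q k := by
  intro k
  induction h with
  | rel _ _ hmove => exact hmove.Tk_eq k
  | refl => rfl
  | symm _ _ _ ih => exact ih.symm
  | trans _ _ _ _ _ ih₁ ih₂ => exact ih₁.trans ih₂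

/-- Fukunaga's `T` invariant is an open homotopy invariant. -/
theorem T_open_homotopy_invariant {n : ℕ} (p q : Phrase n)
    (hp : IsGaussPhrase p) (hq : IsGaussPhrase q) (h : OpenHomotopic p q) :
    ∀ k : Fin n, Tk p k = Tk q k :=
  T_open_homotopy_invariant_general p q h
end

section
/- The 2-component Gauss phrases ABA|B and A|A are homotopic but not open homotopic. Consequently, homotopy and open homotopy of Gauss phrases are not the same equivalence relation. -/
/-!
`ABA|B` becomes `BAA|B` by a shift, then `B|B` by H1, which is `A|A` up to relabelling.

Against open homotopy we use the parity of the number of pairs of equal letters that lie in a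
common component with an odd number of letters between them (on Gauss phrases, the sum over the
components of Fukunaga's `T`). Deleting two adjacent letters changes every other gap by `0` or `2`
letters and moves no separator; the new pairs `A…A` and `B…B` of an H2 move have gaps `ByB` and
`y`, of equal parity; and in an H3 move each of `A`, `B`, `C` keeps the length of its gap and its
component. So the parity is an open homotopy invariant, and it is `1` on `ABA|B` but `0` on `A|A`.
-/

namespace GaussPhrase

/-- The parity of the number of occurrences of `a` at the indices `i` of the first component
of `s` (the part before the first `none`) with `n + i` even. -/
def evenOffsetCount (a : ℕ) : ℕ → List (Option ℕ) → ZMod 2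
  | _, [] => 0
  | _, none :: _ => 0
  | n, some b :: s => (if b = a ∧ Even n then 1 else 0) + evenOffsetCount a (n + 1) s

/-- An occurrence at index `i` of `s` is separated from the head `a` by `i` letters,
hence the offset `1`. -/
def oddGapCount : List (Option ℕ) → ZMod 2
  | [] => 0
  | none :: s => oddGapCount s
  | some a :: s => oddGapCount s + evenOffsetCount a 1 s

section

variable {a b c : ℕ} {n : ℕ} {s u v w w' x y z : List (Option ℕ)}

lemma evenOffsetCount_add_two : ∀ {n : ℕ} (s : List (Option ℕ)),
    evenOffsetCount a (n + 2) s = evenOffsetCount a n s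
  | _, [] => rfl
  | _, none :: _ => rfl
  | n, some b :: s => by
    simp [evenOffsetCount, Nat.even_add_one, evenOffsetCount_add_two (n := n + 1) s,
      show n + 2 + 1 = n + 1 + 2 by omega]

lemma evenOffsetCount_append (ha : some a ∉ u) :
    evenOffsetCount a n (u ++ v) =
      if none ∈ u then 0 else evenOffsetCount a (n + u.length) v := by
  induction u generalizing n with
  | nil => simp
  | cons o u ih =>
    rcases o with _ | b
    · simp [evenOffsetCount]
    · obtain ⟨hba, hau⟩ : b ≠ a ∧ some a ∉ u := by simpa [eq_comm] using ha
      simp [evenOffsetCount, hba, ih hau, add_assoc, add_comm 1]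

lemma evenOffsetCount_eq_zero (ha : some a ∉ s) : evenOffsetCount a n s = 0 := by
  simpa [evenOffsetCount] using evenOffsetCount_append (n := n) (v := []) ha

lemma evenOffsetCount_delete_pair (hb : b ≠ a) (hc : c ≠ a) :
    evenOffsetCount a n (u ++ some b :: some c :: v) = evenOffsetCount a n (u ++ v) := by
  induction u generalizing n with
  | nil => simp [evenOffsetCount, hb, hc, add_assoc, evenOffsetCount_add_two]
  | cons o u ih => rcases o with _ | d <;> simp [evenOffsetCount, ih]

lemma evenOffsetCount_map {f : ℕ → ℕ} (hf : f.Injective) :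
    evenOffsetCount (f a) n (s.map (Option.map f)) = evenOffsetCount a n s := by
  induction s generalizing n with
  | nil => rfl
  | cons o s ih => rcases o with _ | b <;> simp [evenOffsetCount, hf.eq_iff, ih]

lemma oddGapCount_map {f : ℕ → ℕ} (hf : f.Injective) :
    oddGapCount (s.map (Option.map f)) = oddGapCount s := by
  induction s with
  | nil => rfl
  | cons o s ih => rcases o with _ | b <;> simp [oddGapCount, evenOffsetCount_map hf, ih]

lemma oddGapCount_append_congr (hw : oddGapCount w = oddGapCount w')
    (hx : ∀ a, some a ∈ x → ∀ u n,
      evenOffsetCount a n (u ++ w) = evenOffsetCount a n (u ++ w')) :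
    oddGapCount (x ++ w) = oddGapCount (x ++ w') := by
  induction x with
  | nil => simpa
  | cons o x ih =>
    have ih' := ih fun a ha => hx a (List.mem_cons_of_mem _ ha)
    rcases o with _ | a
    · simpa [oddGapCount] using ih'
    · simp only [List.cons_append, oddGapCount, ih', hx a List.mem_cons_self x]

lemma oddGapCount_delete_pair (hb : some b ∉ x ++ z) (hc : some c ∉ x ++ z) :
    oddGapCount (x ++ some b :: some c :: z) = oddGapCount (x ++ z) := by
  simp only [List.mem_append, not_or] at hb hc
  refine oddGapCount_append_congr ?_ fun a ha u n => evenOffsetCount_delete_pair ?_ ?_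
  · simp [oddGapCount, evenOffsetCount, evenOffsetCount_eq_zero hb.2,
      evenOffsetCount_eq_zero hc.2]
  · rintro rfl; exact hb.1 ha
  · rintro rfl; exact hc.1 ha

lemma oddGapCount_h2 {A B : ℕ} (hAB : A ≠ B)
    (hA : some A ∉ x ++ y ++ z) (hB : some B ∉ x ++ y ++ z) :
    oddGapCount (x ++ some A :: some B :: (y ++ some B :: some A :: z)) =
      oddGapCount (x ++ y ++ z) := by
  simp only [List.mem_append, not_or] at hA hB
  obtain ⟨⟨hAx, hAy⟩, hAz⟩ := hA
  obtain ⟨⟨hBx, hBy⟩, hBz⟩ := hB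
  rw [List.append_assoc]
  refine oddGapCount_append_congr ?_ fun a ha u n => ?_
  · rw [← oddGapCount_delete_pair (b := B) (c := A) (by simp [hBy, hBz]) (by simp [hAy, hAz])]
    simp [oddGapCount, evenOffsetCount, evenOffsetCount_append, evenOffsetCount_eq_zero, hAy, hAz,
      hBy, hBz, hAB, hAB.symm, Nat.even_add, add_assoc, CharTwo.add_self_eq_zero]
  · have haA : A ≠ a := by rintro rfl; exact hAx ha
    have haB : B ≠ a := by rintro rfl; exact hBx ha
    simp only [← List.append_assoc, evenOffsetCount_delete_pair haA haB,
      evenOffsetCount_delete_pair haB haA]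

lemma oddGapCount_h3 {A B C : ℕ} (hAB : A ≠ B) (hAC : A ≠ C) (hBC : B ≠ C)
    (hA : some A ∉ w ++ x ++ y ++ z) (hB : some B ∉ w ++ x ++ y ++ z)
    (hC : some C ∉ w ++ x ++ y ++ z) :
    oddGapCount (w ++ some A :: some B :: (x ++ some A :: some C :: (y ++ some B :: some C :: z)))
      = oddGapCount
          (w ++ some B :: some A :: (x ++ some C :: some A :: (y ++ some C :: some B :: z))) := by
  simp only [List.mem_append, not_or] at hA hB hC
  obtain ⟨⟨⟨hAw, hAx⟩, hAy⟩, hAz⟩ := hA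
  obtain ⟨⟨⟨hBw, hBx⟩, hBy⟩, hBz⟩ := hB
  obtain ⟨⟨⟨hCw, hCx⟩, hCy⟩, hCz⟩ := hC
  have hyz : oddGapCount (y ++ some B :: some C :: z) =
      oddGapCount (y ++ some C :: some B :: z) := by
    rw [oddGapCount_delete_pair, oddGapCount_delete_pair] <;> simp [hBy, hBz, hCy, hCz]
  have hxyz : oddGapCount (x ++ some A :: some C :: (y ++ some B :: some C :: z)) =
      oddGapCount (x ++ some C :: some A :: (y ++ some C :: some B :: z)) := by
    refine oddGapCount_append_congr ?_ fun a ha u n => ?_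
    · simp [oddGapCount, evenOffsetCount, evenOffsetCount_append, evenOffsetCount_eq_zero, hyz,
        hAB.symm, hAC, hAC.symm, hBC, hAy, hAz, hCy, hCz, Nat.even_add, Nat.even_add_one]
    · obtain ⟨haA, haB, haC⟩ : A ≠ a ∧ B ≠ a ∧ C ≠ a := by
        refine ⟨?_, ?_, ?_⟩ <;> rintro rfl <;> contradiction
      simp only [← List.append_assoc, evenOffsetCount_delete_pair, haA, haB, haC, ne_eq,
        not_false_eq_true]
  refine oddGapCount_append_congr ?_ fun a ha u n => ?_
  · simp [oddGapCount, evenOffsetCount, evenOffsetCount_append, evenOffsetCount_eq_zero, hxyz,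
      hAB, hAC, hAB.symm, hAC.symm, hBC.symm, hAx, hAy, hAz, hBx, hBy, hBz,
      Nat.even_add, Nat.even_add_one]
    rw [add_right_comm]
    split_ifs <;> simp_all [← Nat.not_even_iff_odd]
  · obtain ⟨haA, haB, haC⟩ : A ≠ a ∧ B ≠ a ∧ C ≠ a := by
      refine ⟨?_, ?_, ?_⟩ <;> rintro rfl <;> contradiction
    simp only [← List.append_assoc, evenOffsetCount_delete_pair, haA, haB, haC, ne_eq,
      not_false_eq_true]

end

end GaussPhrase

lemma List.map_intersperse {α β : Type*} (g : α → β) (sep : α) :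
    ∀ l : List α, (l.intersperse sep).map g = (l.map g).intersperse (g sep)
  | [] => rfl
  | [_] => rfl
  | _ :: _ :: l => by simp [List.map_intersperse g sep (_ :: l)]

lemma sepWord_map {n : ℕ} (p : Phrase n) (f : ℕ → ℕ) :
    sepWord (fun i => (p i).map f) = (sepWord p).map (Option.map f) := by
  simp [sepWord, List.intercalate, List.map_flatten, List.map_intersperse, List.map_ofFn,
    Function.comp_def]

open GaussPhrase in
lemma OpenMove.oddGapCount_eq {n : ℕ} {p q : Phrase n} (h : OpenMove p q) :
    oddGapCount (sepWord p) = oddGapCount (sepWord q) := by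
  cases h with
  | iso f hf => rw [sepWord_map, oddGapCount_map hf.injective]
  | h1 q A x y hA hp hq => rw [hp, hq]; exact oddGapCount_delete_pair hA hA
  | h2 q A B x y z hAB hA hB hp hq => rw [hp, hq]; exact oddGapCount_h2 hAB hA hB
  | h3 q A B C w x y z hAB hAC hBC hA hB hC hp hq =>
    rw [hp, hq]; exact oddGapCount_h3 hAB hAC hBC hA hB hC

open GaussPhrase in
lemma OpenHomotopic.oddGapCount_eq {n : ℕ} {p q : Phrase n} (h : OpenHomotopic p q) :
    oddGapCount (sepWord p) = oddGapCount (sepWord q) := by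
  induction h with
  | rel _ _ h => exact h.oddGapCount_eq
  | refl _ => rfl
  | symm _ _ _ ih => exact ih.symm
  | trans _ _ _ _ _ ih1 ih2 => exact ih1.trans ih2

/-- the Gauss phrases `ABA|B` and `A|A` are homotopic but not open
homotopic; hence homotopy and open homotopy differ. -/
theorem homotopic_not_openHomotopic_example :
    Homotopic (![[0, 1, 0], [1]] : Phrase 2) (![[0], [0]] : Phrase 2) ∧
      ¬ OpenHomotopic (![[0, 1, 0], [1]] : Phrase 2) (![[0], [0]] : Phrase 2) := by
  constructor
  · have shift : ShiftMove (![[0, 1, 0], [1]] : Phrase 2) ![[1, 0, 0], [1]] := by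
      convert ShiftMove.shift (![[0, 1, 0], [1]] : Phrase 2) 0 0 [1, 0] rfl using 1
      decide
    have cancel : OpenMove (![[1, 0, 0], [1]] : Phrase 2) ![[1], [1]] :=
      .h1 _ _ 0 [some 1] [none, some 1] (by decide) rfl rfl
    have relabel : OpenMove (![[1], [1]] : Phrase 2) ![[0], [0]] := by
      convert OpenMove.iso _ _ (Equiv.swap 0 1).bijective using 1
      decide
    exact .trans _ _ _ (.rel _ _ (.inr shift))
      (.trans _ _ _ (.rel _ _ (.inl cancel)) (.rel _ _ (.inl relabel)))
  · exact fun h => absurd h.oddGapCount_eq (by decide)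
end

section
/- For every n-component Gauss phrase p and every k, T_k(p) is equal, modulo 2, to the number of odd vectors in B_k(p), where a vector in (Z/2)^n is odd if the sum of its entries is 1 in Z/2. Hence Fukunaga's T invariant can be computed from S_o. -/
/-!
For a single-component letter `A` of the `k`-th component, every letter occurring once
between the two occurrences of `A` is counted in exactly one entry of `l(A)`, so the entries
of `l(A)` add up to the number of such letters; letters occurring twice there add `2` to the
length, so this sum is the parity of `A`. Thus `T_k` counts the letters `A` with `l(A)` odd,
and sorting them by `l(A)`, modulo 2 only the vectors hit by an odd number of letters survive:
these are the odd vectors of `B_k`, as odd vectors are nonzero.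
-/

namespace ZMod

lemma natCast_eq_ite_odd (m : ℕ) : (m : ZMod 2) = if Odd m then 1 else 0 := by
  split_ifs with h
  · exact natCast_eq_one_iff_odd.2 h
  · exact natCast_eq_zero_iff_even.2 (Nat.not_odd_iff_even.1 h)

end ZMod

namespace Finset

lemma natCast_card_filter_comp_eq_card_odd_fibers {α β : Type*} [Fintype β] [DecidableEq β]
    (s : Finset α) (f : α → β) (P : β → Prop) [DecidablePred P] :
    ((s.filter fun a => P (f a)).card : ZMod 2) =
      ((univ.filter fun v => P v ∧ Odd (s.filter fun a => f a = v).card).card : ZMod 2) := by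
  have hmaps : Set.MapsTo f (s.filter fun a => P (f a)) (univ.filter P) := fun a ha => by
    simpa using (mem_filter.1 ha).2
  have hfiber : ∀ v ∈ univ.filter P,
      ((s.filter fun a => P (f a)).filter fun a => f a = v) = s.filter fun a => f a = v := by
    intro v hv
    rw [filter_filter]
    exact filter_congr fun a _ => ⟨And.right, fun h => ⟨h ▸ (mem_filter.1 hv).2, h⟩⟩
  rw [card_eq_sum_card_fiberwise hmaps, Nat.cast_sum,
    sum_congr rfl fun v hv => by rw [hfiber v hv, ZMod.natCast_eq_ite_odd], sum_boole,
    filter_filter]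

end Finset

namespace List

/-- Letters occurring twice do not change the parity of the length. -/
lemma natCast_length_eq_card_count_eq_one {α : Type*} [DecidableEq α] {w : List α}
    (hw : ∀ b ∈ w, w.count b ≤ 2) :
    (w.length : ZMod 2) = ((w.toFinset.filter fun b => w.count b = 1).card : ZMod 2) := by
  rw [← sum_toFinset_count_eq_length, Nat.cast_sum, Finset.natCast_card_filter]
  refine Finset.sum_congr rfl fun b hb => ?_
  have hpos : 0 < w.count b := count_pos_iff.2 (mem_toFinset.1 hb)
  have hle := hw b (mem_toFinset.1 hb)
  obtain h | h : w.count b = 1 ∨ w.count b = 2 := by omega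
  · simp [h]
  · simp only [h]
    decide

end List

namespace IsGaussPhrase

variable {n : ℕ} {p : Phrase n}

lemma sum_count_eq_two (hp : IsGaussPhrase p) {k : Fin n} {b : ℕ} (hb : b ∈ p k) :
    ∑ i, (p i).count b = 2 := by
  have htot : ∑ i, (p i).count b = (totalWord p).count b := by
    rw [totalWord, List.count_flatten, List.map_ofFn, List.sum_ofFn]
    rfl
  rw [htot]
  exact hp b (List.mem_flatten.2 ⟨p k, List.mem_ofFn.2 ⟨k, rfl⟩, hb⟩)

lemma count_le_two (hp : IsGaussPhrase p) (k : Fin n) (b : ℕ) : (p k).count b ≤ 2 := by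
  by_cases hb : b ∈ p k
  · rw [← hp.sum_count_eq_two hb]
    exact Finset.single_le_sum (f := fun i => (p i).count b) (fun _ _ => Nat.zero_le _)
      (Finset.mem_univ k)
  · simp [List.count_eq_zero.2 hb]

/-- A letter of the `k`-th component is counted in exactly one entry of a linking vector:
in the `k`-th if it is single-component, otherwise in that of its other component. -/
lemma sum_linkVec_indicator_eq_one (hp : IsGaussPhrase p) {k : Fin n} {b : ℕ} (hb : b ∈ p k) :
    ∑ i, (if (if i = k then (p k).count b = 2 else b ∈ p i) then 1 else 0) = 1 := by
  have htwo := hp.sum_count_eq_two hb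
  rw [← Finset.add_sum_erase _ _ (Finset.mem_univ k)] at htwo ⊢
  have hpos : 0 < (p k).count b := List.count_pos_iff.2 hb
  have hother : ∀ i ∈ Finset.univ.erase k,
      (if (if i = k then (p k).count b = 2 else b ∈ p i) then 1 else 0) = (p i).count b := by
    intro i hi
    have hik := Finset.ne_of_mem_erase hi
    have hle : (p i).count b ≤ ∑ j ∈ Finset.univ.erase k, (p j).count b :=
      Finset.single_le_sum (f := fun j => (p j).count b) (fun _ _ => Nat.zero_le _) hi
    by_cases hbi : b ∈ p i
    · have := List.count_pos_iff.2 hbi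
      simp only [if_neg hik, if_pos hbi]
      omega
    · simp [hik, hbi, List.count_eq_zero.2 hbi]
  rw [Finset.sum_congr rfl hother]
  simp only [↓reduceIte]
  split_ifs <;> omega

lemma sum_linkVec (hp : IsGaussPhrase p) {k : Fin n} {w : Word} (hw : w ⊆ p k) :
    ∑ i, linkVec p k w i = ((w.toFinset.filter fun b => w.count b = 1).card : ZMod 2) := by
  simp only [linkVec, Finset.natCast_card_filter]
  rw [Finset.sum_comm]
  refine Finset.sum_congr rfl fun b hb => ?_
  split_ifs with h1
  · simp only [h1, true_and]
    have h := congrArg (Nat.cast : ℕ → ZMod 2)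
      (hp.sum_linkVec_indicator_eq_one (hw (List.mem_toFinset.1 hb)))
    push_cast at h
    exact h
  · simp [h1]

lemma sum_letterVec (hp : IsGaussPhrase p) (k : Fin n) (a : ℕ) :
    ∑ i, letterVec p k a i = ((betweenWord (p k) a).length : ZMod 2) := by
  have hsub : (betweenWord (p k) a).Sublist (p k) :=
    (List.takeWhile_sublist _).trans (List.drop_sublist _ _)
  rw [letterVec, hp.sum_linkVec hsub.subset, List.natCast_length_eq_card_count_eq_one]
  exact fun b _ => (hsub.count_le b).trans (hp.count_le_two k b)

end IsGaussPhrase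

/-- `T_k(p)` equals, modulo 2, the number of odd vectors in `B_k(p)`,
where a vector is odd if the sum of its entries is `1`. -/
theorem T_eq_card_odd_vectors_of_Bk {n : ℕ} (p : Phrase n)
    (hp : IsGaussPhrase p) (k : Fin n) :
    Tk p k = (((Bk p k).filter fun v => ∑ i : Fin n, v i = 1).card : ZMod 2) := by
  set S := (p k).toFinset.filter fun a => (p k).count a = 2
  have hT : Tk p k = ((S.filter fun a => ∑ i, letterVec p k a i = 1).card : ZMod 2) := by
    simp only [Tk, S, Finset.filter_filter, hp.sum_letterVec, ZMod.natCast_eq_one_iff_odd]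
  have hodd_ne_zero : ∀ v : Fin n → ZMod 2, ∑ i, v i = 1 → v ≠ 0 := by
    rintro v hv rfl
    simp at hv
  rw [hT, Finset.natCast_card_filter_comp_eq_card_odd_fibers S (letterVec p k)
    (fun v => ∑ i, v i = 1)]
  congr 2
  ext v
  simp only [Bk, S, Finset.filter_filter, Finset.mem_filter, Finset.mem_univ, true_and]
  exact ⟨fun ⟨hv, ho⟩ => ⟨⟨hodd_ne_zero v hv, ho⟩, hv⟩, fun ⟨⟨_, ho⟩, hv⟩ => ⟨hv, ho⟩⟩
end

section
/- The 3-component Gauss phrase p = ACBADBEF|CE|DF satisfies T(p) = (0,0,0), which equals T of the trivial 3-component Gauss phrase ∅|∅|∅, yet B_1(p) = {(1,0,1),(1,1,0)} is nonempty, so S_o(p) ≠ S_o(∅|∅|∅) and p is not open homotopic to ∅|∅|∅. Hence the invariant S_o is strictly stronger than the invariant T. -/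
/-!
Tag every letter of `p` with the index of its component and give a letter the weight `i + j`
(mod 2), where `i, j` are the components of its two occurrences. The mod 2 sum, over all
single-component letters `A`, of the weights of the letters occurring between the two `A`'s is an
open homotopy invariant; for Gauss phrases it equals `∑ₖ ∑_{v ∈ Bₖ(p)} ∑ᵢ (i + k) vᵢ`, a function
of `S_o`. Transposing two adjacent entries `x y` of a tagged word changes such a sum by
`#x · w(y) + #y · w(x)`, where `#x` is the number of other occurrences of `x`. In an H3 move whose
pairs `AB`, `AC`, `BC` lie in components `k`, `k'`, `k''`, the three such changes cancel because
the weights of `A, B, C` are `k + k'`, `k + k''`, `k' + k''`. H1 and H2 delete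
adjacent pairs of entries of equal weight, after sliding `BA` next to `AB`. The invariant is `1`
on `ACBADBEF|CE|DF`, the only odd contribution being `C` (joining components 1 and 2) between the
two `A`'s, and `0` on `∅|∅|∅`; the values of `T` and `B_k` are computed directly.
-/

theorem List.map_intercalate {α β : Type*} (g : α → β) (s : List α) (L : List (List α)) :
    (s.intercalate L).map g = (s.map g).intercalate (L.map (List.map g)) := by
  induction L with
  | nil => rfl
  | cons l L ih => cases L <;> simp_all

namespace GaussPhrase

section ChordSum

variable {α : Type*} [DecidableEq α] (w : α → ZMod 2)

def enclosedWeight (x : α) : List α → ZMod 2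
  | [] => 0
  | y :: s => (s.count x : ZMod 2) * w y + enclosedWeight x s

/-- The sum of `w s[m]` over all triples `i < m < j` with `s[i] = s[j]`. -/
def chordSum : List α → ZMod 2
  | [] => 0
  | x :: s => enclosedWeight w x s + chordSum s

@[simp] lemma enclosedWeight_nil (x : α) : enclosedWeight w x [] = 0 := rfl

@[simp] lemma enclosedWeight_cons (x y : α) (s : List α) :
    enclosedWeight w x (y :: s) = (s.count x : ZMod 2) * w y + enclosedWeight w x s := rfl

@[simp] lemma chordSum_nil : chordSum w ([] : List α) = 0 := rfl

@[simp] lemma chordSum_cons (x : α) (s : List α) :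
    chordSum w (x :: s) = enclosedWeight w x s + chordSum w s := rfl

lemma enclosedWeight_eq_zero {x : α} {s : List α} (hx : x ∉ s) : enclosedWeight w x s = 0 := by
  induction s with
  | nil => rfl
  | cons y s ih => simp_all [List.count_eq_zero_of_not_mem]

lemma enclosedWeight_congr {w' : α → ZMod 2} (x : α) {s : List α} (h : ∀ y ∈ s, w y = w' y) :
    enclosedWeight w x s = enclosedWeight w' x s := by
  induction s with
  | nil => rfl
  | cons y s ih => simp_all

lemma chordSum_congr {w' : α → ZMod 2} {s : List α} (h : ∀ x ∈ s, w x = w' x) :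
    chordSum w s = chordSum w' s := by
  induction s with
  | nil => rfl
  | cons x s ih =>
    simp_all [enclosedWeight_congr w x fun y hy => h y (List.mem_cons_of_mem _ hy)]

lemma chordSum_map {β : Type*} [DecidableEq β] (w : β → ZMod 2) {φ : α → β}
    (hφ : Function.Injective φ) (s : List α) : chordSum w (s.map φ) = chordSum (w ∘ φ) s := by
  have encl (x : α) (s : List α) :
      enclosedWeight w (φ x) (s.map φ) = enclosedWeight (w ∘ φ) x s := by
    induction s with
    | nil => rfl
    | cons y s ih => simp [ih, List.count_map_of_injective _ _ hφ]
  induction s with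
  | nil => rfl
  | cons x s ih => simp [ih, encl]

lemma enclosedWeight_swap (z x y : α) (u v : List α) :
    enclosedWeight w z (u ++ x :: y :: v) + enclosedWeight w z (u ++ y :: x :: v) =
      (if z = y then w x else 0) + (if z = x then w y else 0) := by
  induction u with
  | nil =>
    simp only [List.nil_append, enclosedWeight_cons, List.count_cons, beq_iff_eq, Nat.cast_add,
      Nat.cast_ite, Nat.cast_one, Nat.cast_zero]
    grind
  | cons q u ih =>
    have hcount : (u ++ x :: y :: v).count z = (u ++ y :: x :: v).count z :=
      ((List.Perm.swap y x v).append_left u).count_eq z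
    simp only [List.cons_append, enclosedWeight_cons, hcount]
    grind

lemma chordSum_swap (x y : α) (u v : List α) :
    chordSum w (u ++ x :: y :: v) + chordSum w (u ++ y :: x :: v) =
      ((u ++ v).count x : ZMod 2) * w y + ((u ++ v).count y : ZMod 2) * w x := by
  induction u with
  | nil =>
    simp only [List.nil_append, chordSum_cons, enclosedWeight_cons]
    grind
  | cons z u ih =>
    have := enclosedWeight_swap w z x y u v
    simp only [List.cons_append, chordSum_cons, List.count_cons, Nat.cast_add, Nat.cast_ite,
      Nat.cast_one, Nat.cast_zero]
    grind

lemma chordSum_slide {x a b : α} (u v : List α) (hxa : x ≠ a) (hxb : x ≠ b)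
    (hab : w a = w b) (hcount : (u ++ v).count a = (u ++ v).count b) :
    chordSum w (u ++ x :: a :: b :: v) = chordSum w (u ++ a :: b :: x :: v) := by
  have h₁ := chordSum_swap w x a u (b :: v)
  have h₂ := chordSum_swap w x b (u ++ [a]) v
  have hc : ((u ++ v).count a : ZMod 2) = (u ++ v).count b := by rw [hcount]
  simp only [List.append_assoc, List.cons_append, List.nil_append] at h₂
  simp only [List.count_append, List.count_cons, beq_iff_eq, hxa.symm, hxb.symm, if_false,
    Nat.cast_add, Nat.cast_ite, Nat.cast_one, Nat.cast_zero] at h₁ h₂ hc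
  grind

lemma chordSum_slide_list {a b : α} (u v xs : List α) (hxs : ∀ x ∈ xs, x ≠ a ∧ x ≠ b)
    (hab : w a = w b) (hcount : (u ++ v).count a = (u ++ v).count b) :
    chordSum w (u ++ xs ++ a :: b :: v) = chordSum w (u ++ a :: b :: (xs ++ v)) := by
  induction xs generalizing u with
  | nil => simp
  | cons x xs ih =>
    have hx := hxs x List.mem_cons_self
    have ha : a ∉ xs := fun h => (hxs a (List.mem_cons_of_mem _ h)).1 rfl
    have hb : b ∉ xs := fun h => (hxs b (List.mem_cons_of_mem _ h)).2 rfl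
    have ih' := ih (u ++ [x]) (fun y hy => hxs y (List.mem_cons_of_mem _ hy))
      (by simpa [List.count_cons, hx.1, hx.2] using hcount)
    simp only [List.append_assoc, List.cons_append, List.nil_append] at ih' ⊢
    rw [ih', chordSum_slide w u (xs ++ v) hx.1 hx.2 hab]
    simpa [List.count_eq_zero_of_not_mem ha, List.count_eq_zero_of_not_mem hb] using hcount

lemma enclosedWeight_cancel {z a b : α} (u v : List α) (ha : z ≠ a) (hb : z ≠ b)
    (hab : w a = w b) : enclosedWeight w z (u ++ a :: b :: v) = enclosedWeight w z (u ++ v) := by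
  induction u with
  | nil => simp [hb.symm, hab]; grind
  | cons q u ih => simp [ih, ha.symm, hb.symm]

lemma chordSum_cancel {a b : α} {u v : List α} (ha : a ∉ u ++ v) (hb : b ∉ u ++ v)
    (hab : w a = w b) : chordSum w (u ++ a :: b :: v) = chordSum w (u ++ v) := by
  induction u with
  | nil =>
    simp only [List.nil_append] at ha hb
    simp [List.count_eq_zero_of_not_mem ha, enclosedWeight_eq_zero w ha,
      enclosedWeight_eq_zero w hb]
  | cons z u ih =>
    simp only [List.cons_append, List.mem_cons, List.mem_append, not_or] at ha hb ⊢
    rw [chordSum_cons, chordSum_cons, enclosedWeight_cancel w u v (Ne.symm ha.1) (Ne.symm hb.1) hab,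
      ih (by simp [ha.2]) (by simp [hb.2])]

end ChordSum

/-- Tags each letter with `k` plus the number of separators before it: on `sepWord p`, starting
from `0`, this is the index of the letter's component. -/
def annotate : ℕ → List (Option ℕ) → List (ℕ × ℕ)
  | _, [] => []
  | k, none :: s => annotate (k + 1) s
  | k, some a :: s => (a, k) :: annotate k s

lemma annotate_append (k : ℕ) (s s' : List (Option ℕ)) :
    annotate k (s ++ s') = annotate k s ++ annotate (k + s.count none) s' := by
  induction s generalizing k with
  | nil => simp [annotate]
  | cons o s ih =>
    cases o with
    | none => simp [annotate, ih]; ring_nf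
    | some a => simp [annotate, ih]

lemma map_fst_annotate (k : ℕ) (s : List (Option ℕ)) :
    (annotate k s).map Prod.fst = s.reduceOption := by
  induction s generalizing k with
  | nil => rfl
  | cons o s ih =>
    cases o <;> simp [annotate, ih, List.reduceOption_cons_of_none, List.reduceOption_cons_of_some]

lemma annotate_map (f : ℕ → ℕ) (k : ℕ) (s : List (Option ℕ)) :
    annotate k (s.map (Option.map f)) = (annotate k s).map (Prod.map f id) := by
  induction s generalizing k with
  | nil => rfl
  | cons o s ih => cases o <;> simp [annotate, ih]

/-- For a letter occurring in components `i` and `j`, this is `i + j` mod 2. -/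
def letterParity (t : List (ℕ × ℕ)) (a : ℕ) : ZMod 2 :=
  ((t.filter (·.1 = a)).map fun e => (e.2 : ZMod 2)).sum

@[simp] lemma letterParity_nil (a : ℕ) : letterParity [] a = 0 := rfl

@[simp] lemma letterParity_cons (e : ℕ × ℕ) (t : List (ℕ × ℕ)) (a : ℕ) :
    letterParity (e :: t) a = (if e.1 = a then (e.2 : ZMod 2) else 0) + letterParity t a := by
  unfold letterParity
  split_ifs <;> simp [*]

@[simp] lemma letterParity_append (t t' : List (ℕ × ℕ)) (a : ℕ) :
    letterParity (t ++ t') a = letterParity t a + letterParity t' a := by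
  simp [letterParity]

lemma letterParity_eq_zero {t : List (ℕ × ℕ)} {a : ℕ} (ha : ∀ j, (a, j) ∉ t) :
    letterParity t a = 0 := by
  induction t with
  | nil => rfl
  | cons e t ih =>
    have hne : e.1 ≠ a := fun h => ha e.2 (by simp [← h])
    simp [hne, ih fun j hj => ha j (List.mem_cons_of_mem _ hj)]

lemma letterParity_map {f : ℕ → ℕ} (hf : Function.Injective f) (t : List (ℕ × ℕ)) (a : ℕ) :
    letterParity (t.map (Prod.map f id)) (f a) = letterParity t a := by
  induction t with
  | nil => rfl
  | cons e t ih => simp [ih, hf.eq_iff]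

def parityChordSum (t : List (ℕ × ℕ)) : ZMod 2 :=
  chordSum (fun e => letterParity t e.1) t

lemma parityChordSum_map {f : ℕ → ℕ} (hf : Function.Injective f) (t : List (ℕ × ℕ)) :
    parityChordSum (t.map (Prod.map f id)) = parityChordSum t := by
  unfold parityChordSum
  rw [chordSum_map _ (Prod.map_injective.2 ⟨hf, Function.injective_id⟩)]
  exact chordSum_congr _ fun e _ => letterParity_map hf t e.1

lemma parityChordSum_h1 {A k : ℕ} {u v : List (ℕ × ℕ)} (hA : A ∉ (u ++ v).map Prod.fst) :
    parityChordSum (u ++ (A, k) :: (A, k) :: v) = parityChordSum (u ++ v) := by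
  have hAk : (A, k) ∉ u ++ v := fun h => hA (List.mem_map_of_mem h)
  unfold parityChordSum
  rw [chordSum_cancel _ hAk hAk rfl]
  refine chordSum_congr _ fun e he => ?_
  have hne : e.1 ≠ A := fun h => hA (h ▸ List.mem_map_of_mem he)
  simp [hne.symm]

lemma parityChordSum_h2 {A B k l : ℕ} {u v z : List (ℕ × ℕ)} (hAB : A ≠ B)
    (hA : A ∉ (u ++ v ++ z).map Prod.fst) (hB : B ∉ (u ++ v ++ z).map Prod.fst) :
    parityChordSum (u ++ (A, k) :: (B, k) :: (v ++ (B, l) :: (A, l) :: z)) =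
      parityChordSum (u ++ v ++ z) := by
  obtain ⟨hAu, hAv, hAz⟩ := by simpa using hA
  obtain ⟨hBu, hBv, hBz⟩ := by simpa using hB
  set t := u ++ (A, k) :: (B, k) :: (v ++ (B, l) :: (A, l) :: z)
  set g : ℕ × ℕ → ZMod 2 := fun e => letterParity t e.1
  have hg : g (B, l) = g (A, l) := by
    simp [g, t, letterParity_eq_zero, hAu, hAv, hAz, hBu, hBv, hBz, hAB, hAB.symm]
  have hv : ∀ e ∈ v, e ≠ (B, l) ∧ e ≠ (A, l) := fun e he => by
    constructor <;> rintro rfl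
    exacts [hBv _ he, hAv _ he]
  calc chordSum g t
      = chordSum g (u ++ [(A, k), (B, k)] ++ v ++ (B, l) :: (A, l) :: z) := by simp [t]
    _ = chordSum g (u ++ [(A, k)] ++ (B, k) :: (B, l) :: (A, l) :: (v ++ z)) := by
        rw [chordSum_slide_list g _ z v hv hg (by
          simp [List.count_cons, List.count_eq_zero_of_not_mem, hAu, hAz, hBu, hBz, hAB])]
        simp
    _ = chordSum g (u ++ [(A, k)] ++ (A, l) :: (v ++ z)) :=
        chordSum_cancel g (by simp [hAB.symm, hBu, hBv, hBz]) (by simp [hAB.symm, hBu, hBv, hBz])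
          rfl
    _ = chordSum g (u ++ (A, k) :: (A, l) :: (v ++ z)) := by simp
    _ = chordSum g (u ++ (v ++ z)) :=
        chordSum_cancel g (by simp [hAu, hAv, hAz]) (by simp [hAu, hAv, hAz]) rfl
    _ = parityChordSum (u ++ v ++ z) := by
        rw [List.append_assoc] at hA hB ⊢
        refine chordSum_congr _ fun e he => ?_
        have hA' : e.1 ≠ A := fun h => hA (h ▸ List.mem_map_of_mem he)
        have hB' : e.1 ≠ B := fun h => hB (h ▸ List.mem_map_of_mem he)
        simp [g, t, hA'.symm, hB'.symm]

lemma parityChordSum_h3 {A B C k k' k'' : ℕ} {u v y z : List (ℕ × ℕ)}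
    (hAB : A ≠ B) (hAC : A ≠ C) (hBC : B ≠ C) (hA : A ∉ (u ++ v ++ y ++ z).map Prod.fst)
    (hB : B ∉ (u ++ v ++ y ++ z).map Prod.fst) (hC : C ∉ (u ++ v ++ y ++ z).map Prod.fst) :
    parityChordSum (u ++ (A, k) :: (B, k) ::
        (v ++ (A, k') :: (C, k') :: (y ++ (B, k'') :: (C, k'') :: z))) =
      parityChordSum (u ++ (B, k) :: (A, k) ::
        (v ++ (C, k') :: (A, k') :: (y ++ (C, k'') :: (B, k'') :: z))) := by
  obtain ⟨hAu, hAv, hAy, hAz⟩ := by simpa using hA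
  obtain ⟨hBu, hBv, hBy, hBz⟩ := by simpa using hB
  obtain ⟨hCu, hCv, hCy, hCz⟩ := by simpa using hC
  set t := u ++ (A, k) :: (B, k) :: (v ++ (A, k') :: (C, k') :: (y ++ (B, k'') :: (C, k'') :: z))
  set t' := u ++ (B, k) :: (A, k) :: (v ++ (C, k') :: (A, k') :: (y ++ (C, k'') :: (B, k'') :: z))
  have hw : letterParity t = letterParity t' := by
    funext a
    simp only [t, t', letterParity_append, letterParity_cons]
    ring
  set g : ℕ × ℕ → ZMod 2 := fun e => letterParity t e.1
  have hgA : letterParity t A = k + k' := by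
    simp [t, letterParity_eq_zero, hAu, hAv, hAy, hAz, hAB, hAC, hAB.symm]
  have hgB : letterParity t B = k + k'' := by
    simp [t, letterParity_eq_zero, hBu, hBv, hBy, hBz, hAB, hBC, hBC.symm]
  have hgC : letterParity t C = k' + k'' := by
    simp [t, letterParity_eq_zero, hCu, hCv, hCy, hCz, hAC, hBC]
  have s₁ := chordSum_swap g (A, k) (B, k) u
    (v ++ (A, k') :: (C, k') :: (y ++ (B, k'') :: (C, k'') :: z))
  have s₂ := chordSum_swap g (A, k') (C, k') (u ++ (B, k) :: (A, k) :: v)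
    (y ++ (B, k'') :: (C, k'') :: z)
  have s₃ := chordSum_swap g (B, k'') (C, k'')
    (u ++ (B, k) :: (A, k) :: (v ++ (C, k') :: (A, k') :: y)) z
  simp only [List.append_assoc, List.cons_append] at s₂ s₃
  simp [List.count_cons, List.count_eq_zero_of_not_mem, hAu, hAv, hAy, hAz, hBu, hBv, hBy, hBz,
    hCu, hCv, hCy, hCz, hAB, hAC, hBC, hAB.symm, hAC.symm, hBC.symm, g, hgA, hgB, hgC] at s₁ s₂ s₃
  unfold parityChordSum
  rw [← hw]
  -- the two corrections guarded by `k = k'` add up to `k + k'`, and similarly for the others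
  split_ifs at s₁ s₂ s₃ <;> subst_vars <;> grind

lemma sepWord_map {n : ℕ} (p : Phrase n) (f : ℕ → ℕ) :
    sepWord (fun i => (p i).map f) = (sepWord p).map (Option.map f) := by
  simp [sepWord, List.map_intercalate, List.map_ofFn, Function.comp_def]

def chordInvariant {n : ℕ} (p : Phrase n) : ZMod 2 := parityChordSum (annotate 0 (sepWord p))

lemma chordInvariant_eq_of_openMove {n : ℕ} {p q : Phrase n} (h : OpenMove p q) :
    chordInvariant p = chordInvariant q := by
  cases h with
  | iso f hf =>
    simp only [chordInvariant, sepWord_map, annotate_map]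
    exact (parityChordSum_map hf.injective _).symm
  | h1 _ A x y hA hp hq =>
    simp only [chordInvariant, hp, hq, annotate_append, annotate, zero_add]
    exact parityChordSum_h1 (by simpa [map_fst_annotate, List.reduceOption_mem_iff] using hA)
  | h2 _ A B x y z hAB hA hB hp hq =>
    simp only [chordInvariant, hp, hq, annotate_append, annotate, zero_add, List.count_append]
    exact parityChordSum_h2 hAB (by simpa [map_fst_annotate, List.reduceOption_mem_iff] using hA)
      (by simpa [map_fst_annotate, List.reduceOption_mem_iff] using hB)
  | h3 _ A B C w x y z hAB hAC hBC hA hB hC hp hq =>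
    simp only [chordInvariant, hp, hq, annotate_append, annotate, zero_add]
    exact parityChordSum_h3 hAB hAC hBC
      (by simpa [map_fst_annotate, List.reduceOption_mem_iff] using hA)
      (by simpa [map_fst_annotate, List.reduceOption_mem_iff] using hB)
      (by simpa [map_fst_annotate, List.reduceOption_mem_iff] using hC)

lemma chordInvariant_eq_of_openHomotopic {n : ℕ} {p q : Phrase n} (h : OpenHomotopic p q) :
    chordInvariant p = chordInvariant q := by
  induction h with
  | rel _ _ h => exact chordInvariant_eq_of_openMove h
  | refl => rfl
  | symm _ _ _ ih => exact ih.symm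
  | trans _ _ _ _ _ ih₁ ih₂ => exact ih₁.trans ih₂

end GaussPhrase

/-- for `p = ACBADBEF|CE|DF` (letters `A,…,F` encoded as `0,…,5`), the `T`
invariant of `p` agrees with that of the trivial phrase `∅|∅|∅`, but
`B_1(p) = {(1,0,1), (1,1,0)}` is nonempty while every `B_k` of the trivial phrase is
empty; hence `S_o` distinguishes them and `p` is not open homotopic to the trivial
phrase, so `S_o` is stronger than `T`. -/
theorem So_stronger_than_T_example :
    (∀ k : Fin 3, Tk (![[0, 2, 1, 0, 3, 1, 4, 5], [2, 4], [3, 5]] : Phrase 3) k =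
        Tk (![[], [], []] : Phrase 3) k) ∧
    Bk (![[0, 2, 1, 0, 3, 1, 4, 5], [2, 4], [3, 5]] : Phrase 3) 0 =
        {![1, 0, 1], ![1, 1, 0]} ∧
    (∀ k : Fin 3, Bk (![[], [], []] : Phrase 3) k = ∅) ∧
    ¬ OpenHomotopic (![[0, 2, 1, 0, 3, 1, 4, 5], [2, 4], [3, 5]] : Phrase 3)
        (![[], [], []] : Phrase 3) := by
  refine ⟨by decide, by decide, by decide, fun h => ?_⟩
  have hp : GaussPhrase.chordInvariant
      (![[0, 2, 1, 0, 3, 1, 4, 5], [2, 4], [3, 5]] : Phrase 3) = 1 := by decide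
  have htriv : GaussPhrase.chordInvariant (![[], [], []] : Phrase 3) = 0 := by decide
  exact one_ne_zero <| hp.symm.trans <|
    (GaussPhrase.chordInvariant_eq_of_openHomotopic h).trans htriv
end

section
/- For every n-component Gauss phrase p and every k, the set B_k(p) contains an even number of k-odd vectors, where a vector in (Z/2)^n is k-odd if its k-th entry is 1. -/
/-!
Count letters instead of vectors: modulo 2, the number of `k`-odd vectors in `B_k(p)` is the
number of single-component letters `a` of the `k`-th component whose linking vector has
`k`-th entry `1`. That entry is the parity of the number of single-component letters `b`
interlaced with `a`, i.e. occurring exactly once between the two occurrences of `a`.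
Interlacing is symmetric and irreflexive, so by the handshake lemma an even number of
letters are interlaced with an odd number of letters.
-/

open Finset

namespace List

variable {α : Type*} [DecidableEq α] {l : List α} {a : α}

lemma exists_eq_append_cons_of_count_eq_one (h : l.count a = 1) :
    ∃ s t, l = s ++ a :: t ∧ a ∉ s ∧ a ∉ t := by
  obtain ⟨s, t, hs, rfl, -⟩ := exists_erase_eq (count_pos_iff.mp (by omega : 0 < l.count a))
  refine ⟨s, t, rfl, hs, fun ht => ?_⟩
  have := count_pos_iff.mpr ht
  simp [count_append, count_eq_zero_of_not_mem hs] at h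
  omega

lemma exists_eq_append_cons_append_cons_of_count_eq_two (h : l.count a = 2) :
    ∃ x y z, l = x ++ a :: (y ++ a :: z) ∧ a ∉ x ∧ a ∉ y ∧ a ∉ z := by
  obtain ⟨x, t, hx, rfl, -⟩ := exists_erase_eq (count_pos_iff.mp (by omega : 0 < l.count a))
  obtain ⟨y, z, rfl, hy, hz⟩ := exists_eq_append_cons_of_count_eq_one (l := t) (a := a)
    (by simpa [count_append, count_eq_zero_of_not_mem hx] using h)
  exact ⟨x, y, z, rfl, hx, hy, hz⟩

end List

theorem Finset.even_card_filter_odd_card_filter {α : Type*} [DecidableEq α] (s : Finset α)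
    (r : α → α → Prop) [DecidableRel r] (hsymm : ∀ a ∈ s, ∀ b ∈ s, r a b → r b a)
    (hirrefl : ∀ a ∈ s, ¬ r a a) :
    Even #{a ∈ s | Odd #{b ∈ s | r a b}} := by
  let G : SimpleGraph s :=
    { Adj a b := r a b
      symm := ⟨fun a b => hsymm a a.2 b b.2⟩
      loopless := ⟨fun a => hirrefl a a.2⟩ }
  have hcard (q : α → Prop) [DecidablePred q] : #{a : s | q a} = #{a ∈ s | q a} := by
    rw [univ_eq_attach, filter_attach, card_map, card_attach]
  have hdeg (a : s) : G.degree a = #{b ∈ s | r a b} := by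
    rw [← SimpleGraph.card_neighborFinset_eq_degree, SimpleGraph.neighborFinset_eq_filter,
      ← hcard]
  have := G.even_card_odd_degree_vertices
  simp only [hdeg] at this
  rwa [hcard (fun a => Odd #{b ∈ s | r a b})] at this

theorem Finset.natCast_sum_eq_card_filter_odd {β : Type*} (t : Finset β) (m : β → ℕ) :
    ((∑ v ∈ t, m v : ℕ) : ZMod 2) = #{v ∈ t | Odd (m v)} := by
  rw [Nat.cast_sum, card_filter, Nat.cast_sum]
  refine sum_congr rfl fun v _ => ?_
  split_ifs with h
  · simpa using ZMod.natCast_eq_one_iff_odd.mpr h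
  · simpa using ZMod.natCast_eq_zero_iff_even.mpr (Nat.not_odd_iff_even.mp h)

theorem Finset.natCast_card_filter_odd_card_fiber {α β : Type*} [Fintype β] [DecidableEq β]
    (s : Finset α) (f : α → β) (P : β → Prop) [DecidablePred P] :
    (#{v | Odd #{a ∈ s | f a = v} ∧ P v} : ZMod 2) = #{a ∈ s | P (f a)} := by
  rw [card_eq_sum_card_fiberwise (t := {v | P v}) (f := f) (by intro a; simp),
    natCast_sum_eq_card_filter_odd, filter_filter]
  congr 2
  ext v
  simp only [mem_filter, mem_univ, true_and, filter_filter]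
  refine and_comm.trans (and_congr_right fun hv => ?_)
  rw [filter_congr fun a _ => ⟨fun h => ⟨h ▸ hv, h⟩, And.right⟩]

lemma betweenWord_append_cons_append_cons {x y z : Word} {a : ℕ} (hx : a ∉ x) (hy : a ∉ y) :
    betweenWord (x ++ a :: (y ++ a :: z)) a = y := by
  have hdrop : (x ++ a :: (y ++ a :: z)).drop (x.length + 1) = y ++ a :: z := by simp
  rw [betweenWord, List.idxOf_append_of_notMem hx, List.idxOf_cons_self, Nat.add_zero, hdrop,
    List.takeWhile_append, List.takeWhile_eq_self_iff.mpr (by grind), if_pos rfl,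
    List.takeWhile_cons_of_neg (by simp), List.append_nil]

lemma count_betweenWord_self (w : Word) (a : ℕ) : (betweenWord w a).count a = 0 :=
  List.count_eq_zero.mpr fun h => by simpa using List.mem_takeWhile_imp h

lemma betweenWord_sublist (w : Word) (a : ℕ) : (betweenWord w a).Sublist w :=
  (List.takeWhile_sublist _).trans (List.drop_sublist _ _)

abbrev Interlaced (w : Word) (a b : ℕ) : Prop := (betweenWord w a).count b = 1

namespace Interlaced

variable {w : Word} {a b : ℕ}

lemma irrefl (w : Word) (a : ℕ) : ¬ Interlaced w a a := by
  simp [Interlaced, count_betweenWord_self]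

lemma symm (ha : w.count a = 2) (hb : w.count b = 2) (h : Interlaced w a b) :
    Interlaced w b a := by
  have hab : a ≠ b := by rintro rfl; exact irrefl w a h
  obtain ⟨x, y, z, rfl, hx, hy, hz⟩ := List.exists_eq_append_cons_append_cons_of_count_eq_two ha
  rw [Interlaced, betweenWord_append_cons_append_cons hx hy] at h
  have hxz : x.count b + z.count b = 1 := by
    simp [List.count_append, hab, h] at hb
    omega
  obtain ⟨y₁, y₂, rfl, hy₁, hy₂⟩ := List.exists_eq_append_cons_of_count_eq_one h
  rcases Nat.eq_zero_or_pos (x.count b) with hxb | hxb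
  · obtain ⟨z₁, z₂, rfl, hz₁, -⟩ := List.exists_eq_append_cons_of_count_eq_one
      (show z.count b = 1 by omega)
    have hshape : x ++ a :: ((y₁ ++ b :: y₂) ++ a :: (z₁ ++ b :: z₂))
        = (x ++ a :: y₁) ++ b :: ((y₂ ++ a :: z₁) ++ b :: z₂) := by simp
    rw [Interlaced, hshape, betweenWord_append_cons_append_cons
      (by simp [List.count_eq_zero.mp hxb, hab.symm, hy₁]) (by simp [hy₂, hab.symm, hz₁])]
    grind [List.count_eq_zero]
  · obtain ⟨x₁, x₂, rfl, hx₁, hx₂⟩ := List.exists_eq_append_cons_of_count_eq_one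
      (show x.count b = 1 by omega)
    have hshape : (x₁ ++ b :: x₂) ++ a :: ((y₁ ++ b :: y₂) ++ a :: z)
        = x₁ ++ b :: ((x₂ ++ a :: y₁) ++ b :: (y₂ ++ a :: z)) := by simp
    rw [Interlaced, hshape,
      betweenWord_append_cons_append_cons hx₁ (by simp [hx₂, hab.symm, hy₁])]
    grind [List.count_eq_zero]

end Interlaced

def doubledLetters (w : Word) : Finset ℕ := {a ∈ w.toFinset | w.count a = 2}

lemma letterVec_apply_self {n : ℕ} (p : Phrase n) (k : Fin n) (a : ℕ) :
    letterVec p k a k = #{b ∈ doubledLetters (p k) | Interlaced (p k) a b} := by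
  simp only [letterVec, linkVec, doubledLetters, filter_filter]
  congr 2
  ext b
  simp only [mem_filter, List.mem_toFinset, if_true]
  exact ⟨fun ⟨hb, h1, h2⟩ => ⟨(betweenWord_sublist _ a).subset hb, h2, h1⟩,
    fun ⟨_, h2, h1⟩ => ⟨List.count_pos_iff.mp (h1 ▸ one_pos), h1, h2⟩⟩

theorem Bk_even_number_of_k_odd_vectors_general {n : ℕ} (p : Phrase n) (k : Fin n) :
    Even (((Bk p k).filter fun v => v k = 1).card) := by
  have hB : {v ∈ Bk p k | v k = 1} =
      ({v | Odd #{a ∈ doubledLetters (p k) | letterVec p k a = v} ∧ v k = 1} : Finset _) := by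
    simp only [Bk, doubledLetters, filter_filter]
    refine filter_congr fun v _ => ⟨fun h => ⟨h.1.2, h.2⟩, fun ⟨hodd, hv⟩ => ?_⟩
    exact ⟨⟨by rintro rfl; simp at hv, hodd⟩, hv⟩
  rw [← ZMod.natCast_eq_zero_iff_even, hB, natCast_card_filter_odd_card_fiber,
    ZMod.natCast_eq_zero_iff_even]
  simp only [letterVec_apply_self, ZMod.natCast_eq_one_iff_odd]
  exact even_card_filter_odd_card_filter _ _
    (fun a ha b hb => Interlaced.symm (mem_filter.mp ha).2 (mem_filter.mp hb).2)
    (fun a _ => Interlaced.irrefl _ a)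

/-- `B_k(p)` contains an even number of `k`-odd vectors
(vectors whose `k`-th entry is `1`). -/
theorem Bk_even_number_of_k_odd_vectors {n : ℕ} (p : Phrase n)
    (hp : IsGaussPhrase p) (k : Fin n) :
    Even (((Bk p k).filter fun v => v k = 1).card) :=
  Bk_even_number_of_k_odd_vectors_general p k
end

section
/- Let n be a positive integer and, for each k from 1 to n, let B_k be a subset of (Z/2)^n \ {0} containing an even number of k-odd vectors (a vector is k-odd if its k-th entry is 1). Then there exists an n-component Gauss phrase p such that B_k(p) = B_k for every k from 1 to n. -/
/-!
For each `k` and each `v ∈ B k`, component `k` gets a gadget `A c₁ ⋯ cₘ A` in which the letter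
`A = main k v` has linking vector `v`: there is one letter `cᵢ = link k v i` for every `i ≠ k` with
`v i = 1`, and its second occurrence is put at the end of component `i`. If `v k = 1`, a
single-component letter `D = parity k v` is inserted as well, the gadget becoming `A c₁ ⋯ cₘ D A D`,
so that still `l(A) = v`, while `l(D) = e_k`. The single-component letters of component `k` are
exactly these `A`s and `D`s, and the `D`s, one for each `k`-odd vector of `B k`, come in an even
number, so they do not contribute to `B_k(p)`.
-/

namespace SoRealizable

variable {n : ℕ}

theorem betweenWord_append_cons_append_cons {x y z : Word} {a : ℕ} (hx : a ∉ x) (hy : a ∉ y) :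
    betweenWord (x ++ a :: (y ++ a :: z)) a = y := by
  have hdrop : (x ++ a :: (y ++ a :: z)).drop ((x ++ a :: (y ++ a :: z)).idxOf a + 1) =
      y ++ a :: z := by
    rw [List.idxOf_append_of_notMem hx, List.idxOf_cons_self]
    simp [List.drop_append]
  rw [betweenWord, hdrop,
    List.takeWhile_append_of_pos fun b hb => by simpa using ne_of_mem_of_not_mem hb hy]
  simp

theorem linkVec_apply_of_nodup {p : Phrase n} {k : Fin n} {w : Word} (hw : w.Nodup) (i : Fin n) :
    linkVec p k w i =
      (w.countP fun a => if i = k then (p k).count a = 2 else a ∈ p i : ℕ) := by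
  rw [linkVec, List.countP_eq_length_filter, ← List.toFinset_card_of_nodup (hw.filter _),
    List.toFinset_filter]
  refine congrArg _ (congrArg _ (Finset.filter_congr fun a ha => ?_))
  simp [List.count_eq_one_of_mem hw (List.mem_toFinset.1 ha)]

theorem count_totalWord (p : Phrase n) (a : ℕ) : (totalWord p).count a = ∑ j, (p j).count a := by
  rw [totalWord, List.count_flatten, List.map_ofFn, List.sum_ofFn]
  rfl

theorem mem_totalWord {p : Phrase n} {a : ℕ} : a ∈ totalWord p ↔ ∃ j, a ∈ p j := by
  simp [totalWord]

theorem count_flatMap_toList {α β : Type*} [BEq β] (s : Finset α) (g : α → List β) (b : β) :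
    (s.toList.flatMap g).count b = ∑ a ∈ s, (g a).count b := by
  rw [List.count_flatMap, Finset.sum_map_toList]
  rfl

theorem countP_finRange_eq_and (i : Fin n) (q : Fin n → Prop) [DecidablePred q] :
    (List.finRange n).countP (fun j => j = i ∧ q j) = if q i then 1 else 0 := by
  split_ifs with hq
  · rw [← List.count_finRange i, List.count_eq_countP]
    congr 1
    funext j
    by_cases hj : j = i <;> simp [hj, hq]
  · refine List.countP_eq_zero.2 fun j _ => ?_
    simp only [decide_eq_true_eq, not_and]
    rintro rfl
    exact hq

inductive Letter (n : ℕ) where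
  | main (k : Fin n) (v : Fin n → ZMod 2)
  | parity (k : Fin n) (v : Fin n → ZMod 2)
  | link (k : Fin n) (v : Fin n → ZMod 2) (i : Fin n)
  deriving DecidableEq, Fintype

noncomputable def Letter.toNat (l : Letter n) : ℕ := Fintype.equivFin (Letter n) l

theorem Letter.toNat_injective : Function.Injective (Letter.toNat (n := n)) :=
  fun _ _ h => (Fintype.equivFin _).injective (Fin.val_injective h)

open Letter

def links (k : Fin n) (v : Fin n → ZMod 2) : List (Letter n) :=
  ((List.finRange n).filter fun i => i ≠ k ∧ v i = 1).map (link k v)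

def parityLetters (k : Fin n) (v : Fin n → ZMod 2) : List (Letter n) :=
  if v k = 1 then [parity k v] else []

def gadget (k : Fin n) (v : Fin n → ZMod 2) : List (Letter n) :=
  main k v :: (links k v ++ parityLetters k v ++ main k v :: parityLetters k v)

variable (B : Fin n → Finset (Fin n → ZMod 2))

noncomputable def linkTail (i : Fin n) : List (Letter n) :=
  (List.finRange n).flatMap fun k =>
    ((B k).toList.filter fun v => k ≠ i ∧ v i = 1).map fun v => link k v i

noncomputable def word (k : Fin n) : List (Letter n) :=
  (B k).toList.flatMap (gadget k) ++ linkTail B k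

noncomputable def phrase : Phrase n := fun k => (word B k).map toNat

variable {B}

theorem mem_links {k : Fin n} {v : Fin n → ZMod 2} {l : Letter n} :
    l ∈ links k v ↔ ∃ i, i ≠ k ∧ v i = 1 ∧ link k v i = l := by
  simp [links, and_assoc]

theorem nodup_links (k : Fin n) (v : Fin n → ZMod 2) : (links k v).Nodup :=
  ((List.nodup_finRange n).filter _).map fun _ _ h => (link.inj h).2.2

theorem mem_linkTail {i : Fin n} {l : Letter n} :
    l ∈ linkTail B i ↔ ∃ k v, k ≠ i ∧ v ∈ B k ∧ v i = 1 ∧ link k v i = l := by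
  simp only [linkTail, List.mem_flatMap, List.mem_finRange, List.mem_map, List.mem_filter,
    Finset.mem_toList, decide_eq_true_eq, true_and]
  aesop

theorem nodup_linkTail (i : Fin n) : (linkTail B i).Nodup := by
  refine List.nodup_flatMap.2 ⟨fun k _ => ?_, ?_⟩
  · exact ((B k).nodup_toList.filter _).map fun _ _ h => (link.inj h).2.1
  · refine (List.nodup_finRange n).imp fun hne l hl hl' => hne ?_
    simp only [List.mem_map] at hl hl'
    obtain ⟨_, _, rfl⟩ := hl
    obtain ⟨_, _, h⟩ := hl'
    exact (link.inj h).1.symm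

theorem count_links (k : Fin n) (v : Fin n → ZMod 2) (l : Letter n) :
    (links k v).count l = if ∃ i, i ≠ k ∧ v i = 1 ∧ link k v i = l then 1 else 0 := by
  simp only [(nodup_links k v).count, mem_links]

theorem count_gadget_main (j k : Fin n) (w v : Fin n → ZMod 2) :
    (gadget j w).count (main k v) = if j = k ∧ w = v then 2 else 0 := by
  simp only [gadget, parityLetters, List.count_cons, List.count_append, count_links]
  by_cases h : w j = 1 <;> simp [h] <;> grind

theorem count_gadget_parity (j k : Fin n) (w v : Fin n → ZMod 2) :
    (gadget j w).count (parity k v) = if j = k ∧ w = v ∧ v k = 1 then 2 else 0 := by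
  simp only [gadget, parityLetters, List.count_cons, List.count_append, count_links]
  by_cases h : w j = 1 <;> simp [h] <;> grind

theorem count_gadget_link (j k i : Fin n) (w v : Fin n → ZMod 2) :
    (gadget j w).count (link k v i) = if j = k ∧ w = v ∧ i ≠ k ∧ v i = 1 then 1 else 0 := by
  simp only [gadget, parityLetters, List.count_cons, List.count_append, count_links]
  by_cases h : w j = 1 <;> simp [h] <;> grind

theorem count_linkTail_link (j k i : Fin n) (v : Fin n → ZMod 2) :
    (linkTail B j).count (link k v i) = if i = j ∧ k ≠ i ∧ v ∈ B k ∧ v i = 1 then 1 else 0 := by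
  simp [(nodup_linkTail j).count, mem_linkTail]
  grind

theorem count_word_main (j k : Fin n) (v : Fin n → ZMod 2) :
    (word B j).count (main k v) = if j = k ∧ v ∈ B k then 2 else 0 := by
  rw [word, List.count_append, count_flatMap_toList,
    List.count_eq_zero.2 (by simp [mem_linkTail])]
  simp only [count_gadget_main]
  by_cases hj : j = k
  · subst hj; simp [Finset.sum_ite_eq']
  · simp [hj]

theorem count_word_parity (j k : Fin n) (v : Fin n → ZMod 2) :
    (word B j).count (parity k v) = if j = k ∧ v ∈ B k ∧ v k = 1 then 2 else 0 := by
  rw [word, List.count_append, count_flatMap_toList,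
    List.count_eq_zero.2 (by simp [mem_linkTail])]
  simp only [count_gadget_parity]
  by_cases hj : j = k
  · subst hj; simp [ite_and, Finset.sum_ite_eq']
  · simp [hj]

theorem count_word_link (j k i : Fin n) (v : Fin n → ZMod 2) :
    (word B j).count (link k v i) =
      if v ∈ B k ∧ i ≠ k ∧ v i = 1 ∧ (j = k ∨ j = i) then 1 else 0 := by
  rw [word, List.count_append, count_flatMap_toList, count_linkTail_link]
  simp only [count_gadget_link]
  by_cases hj : j = k
  · subst hj; simp [ite_and, Finset.sum_ite_eq']; grind
  · simp [hj]; grind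

theorem sum_count_word_of_mem {l : Letter n} {j : Fin n} (hl : l ∈ word B j) :
    ∑ j, (word B j).count l = 2 := by
  rw [← List.count_pos_iff] at hl
  cases l with
  | main k v =>
    simp only [count_word_main] at hl ⊢
    obtain ⟨⟨-, hv⟩, -⟩ := Nat.pos_iff_ne_zero.1 hl |> ite_ne_right_iff.1
    simp [hv]
  | parity k v =>
    simp only [count_word_parity] at hl ⊢
    obtain ⟨⟨-, hv, hvk⟩, -⟩ := Nat.pos_iff_ne_zero.1 hl |> ite_ne_right_iff.1
    simp [hv, hvk]
  | link k v i =>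
    simp only [count_word_link] at hl ⊢
    obtain ⟨⟨hv, hik, hvi, -⟩, -⟩ := Nat.pos_iff_ne_zero.1 hl |> ite_ne_right_iff.1
    simp only [hv, hik, hvi, ne_eq, not_false_eq_true, true_and, Finset.sum_boole]
    exact Finset.card_eq_two.2 ⟨k, i, hik.symm, by ext; simp⟩

theorem isGaussPhrase_phrase : IsGaussPhrase (phrase B) := by
  intro a ha
  obtain ⟨j, hj⟩ := mem_totalWord.1 ha
  obtain ⟨l, hl, rfl⟩ := List.mem_map.1 hj
  simp only [count_totalWord, phrase, List.count_map_of_injective _ _ toNat_injective]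
  exact sum_count_word_of_mem hl

theorem exists_word_eq_append_gadget {k : Fin n} {v : Fin n → ZMod 2} (hv : v ∈ B k) :
    ∃ x y, word B k = x ++ gadget k v ++ y ∧ main k v ∉ x ∧ parity k v ∉ x := by
  obtain ⟨l₁, l₂, hl⟩ := List.append_of_mem (Finset.mem_toList.2 hv)
  have hvl₁ : v ∉ l₁ := fun h => by
    have := (B k).nodup_toList
    rw [hl, List.nodup_append] at this
    exact this.2.2 v h v List.mem_cons_self rfl
  refine ⟨l₁.flatMap (gadget k), l₂.flatMap (gadget k) ++ linkTail B k, by simp [word, hl], ?_, ?_⟩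
  · rw [List.mem_flatMap]
    rintro ⟨w, hw, h⟩
    rw [← List.count_pos_iff, count_gadget_main] at h
    obtain rfl : w = v := by by_contra hne; simp [hne] at h
    exact hvl₁ hw
  · rw [List.mem_flatMap]
    rintro ⟨w, hw, h⟩
    rw [← List.count_pos_iff, count_gadget_parity] at h
    obtain rfl : w = v := by by_contra hne; simp [hne] at h
    exact hvl₁ hw

theorem betweenWord_main {k : Fin n} {v : Fin n → ZMod 2} (hv : v ∈ B k) :
    betweenWord (phrase B k) (main k v).toNat = (links k v ++ parityLetters k v).map toNat := by
  obtain ⟨x, y, hw, hx, -⟩ := exists_word_eq_append_gadget hv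
  have hsplit : phrase B k = x.map toNat ++ (main k v).toNat ::
      ((links k v ++ parityLetters k v).map toNat ++ (main k v).toNat ::
        (parityLetters k v ++ y).map toNat) := by
    simp [phrase, hw, gadget]
  rw [hsplit, betweenWord_append_cons_append_cons]
  · rwa [List.mem_map_of_injective toNat_injective]
  · rw [List.mem_map_of_injective toNat_injective]
    simp [mem_links, parityLetters]

theorem betweenWord_parity {k : Fin n} {v : Fin n → ZMod 2} (hv : v ∈ B k) (hvk : v k = 1) :
    betweenWord (phrase B k) (parity k v).toNat = [(main k v).toNat] := by
  obtain ⟨x, y, hw, -, hx⟩ := exists_word_eq_append_gadget hv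
  have hsplit : phrase B k = (x ++ main k v :: links k v).map toNat ++ (parity k v).toNat ::
      ([(main k v).toNat] ++ (parity k v).toNat :: y.map toNat) := by
    simp [phrase, hw, gadget, parityLetters, hvk]
  rw [hsplit, betweenWord_append_cons_append_cons]
  · rw [List.mem_map_of_injective toNat_injective]
    simp [hx, mem_links]
  · simp [toNat_injective.eq_iff]

theorem linkVec_phrase_map {k : Fin n} {L : List (Letter n)} (hL : L.Nodup) (i : Fin n) :
    linkVec (phrase B) k (L.map toNat) i =
      (L.countP fun l => if i = k then (word B k).count l = 2 else l ∈ word B i : ℕ) := by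
  rw [linkVec_apply_of_nodup (hL.map toNat_injective), List.countP_map]
  congr 3
  funext l
  simp [phrase, List.count_map_of_injective _ _ toNat_injective, toNat_injective.eq_iff]

theorem countP_links {k : Fin n} {v : Fin n → ZMod 2} (hv : v ∈ B k) (i : Fin n) :
    (links k v).countP (fun l => if i = k then (word B k).count l = 2 else l ∈ word B i) =
      if i ≠ k ∧ v i = 1 then 1 else 0 := by
  rw [links, List.countP_map, List.countP_filter,
    ← countP_finRange_eq_and i fun j => j ≠ k ∧ v j = 1]
  congr 1
  funext j
  by_cases hik : i = k <;> simp [hik, ← List.count_pos_iff, count_word_link, hv] <;> grind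

theorem countP_parityLetters {k : Fin n} {v : Fin n → ZMod 2} (hv : v ∈ B k) (i : Fin n) :
    (parityLetters k v).countP
        (fun l => if i = k then (word B k).count l = 2 else l ∈ word B i) =
      if i = k ∧ v i = 1 then 1 else 0 := by
  unfold parityLetters
  by_cases hik : i = k <;> by_cases hvk : v k = 1 <;>
    simp [hik, hvk, ← List.count_pos_iff, count_word_parity, hv]

theorem linkVec_crossing {k : Fin n} {v : Fin n → ZMod 2} (hv : v ∈ B k) :
    linkVec (phrase B) k ((links k v ++ parityLetters k v).map toNat) = v := by
  funext i
  have hnodup : (links k v ++ parityLetters k v).Nodup := by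
    refine List.nodup_append.2 ⟨nodup_links k v, ?_, ?_⟩
    · unfold parityLetters; split_ifs <;> simp
    · intro a ha b hb
      unfold parityLetters at hb
      split_ifs at hb <;> simp only [List.mem_singleton, List.not_mem_nil] at hb
      obtain ⟨j, -, -, rfl⟩ := mem_links.1 ha
      simp [hb]
  have hZMod2 : ∀ x : ZMod 2, ((if x = 1 then 1 else 0 : ℕ) : ZMod 2) = x := by decide
  rw [linkVec_phrase_map hnodup, List.countP_append, countP_links hv, countP_parityLetters hv,
    ← hZMod2 (v i)]
  by_cases hik : i = k <;> by_cases hvi : v i = 1 <;> simp [hik, hvi]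

theorem letterVec_main {k : Fin n} {v : Fin n → ZMod 2} (hv : v ∈ B k) :
    letterVec (phrase B) k (main k v).toNat = v := by
  rw [letterVec, betweenWord_main hv, linkVec_crossing hv]

theorem letterVec_parity {k : Fin n} {v : Fin n → ZMod 2} (hv : v ∈ B k) (hvk : v k = 1) :
    letterVec (phrase B) k (parity k v).toNat = Pi.single k 1 := by
  funext i
  rw [letterVec, betweenWord_parity hv hvk, ← List.map_singleton,
    linkVec_phrase_map (List.nodup_singleton _)]
  by_cases hik : i = k <;> simp [hik, ← List.count_pos_iff, count_word_main, hv]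

theorem filter_count_word_eq_two (k : Fin n) :
    (word B k).toFinset.filter (fun l => (word B k).count l = 2) =
      (B k).image (main k) ∪ ((B k).filter (· k = 1)).image (parity k) := by
  ext l
  cases l <;> simp [← List.count_pos_iff, count_word_main, count_word_parity, count_word_link] <;>
    grind

theorem card_filter_letterVec_phrase (k : Fin n) (u : Fin n → ZMod 2) :
    ((phrase B k).toFinset.filter fun a =>
        (phrase B k).count a = 2 ∧ letterVec (phrase B) k a = u).card =
      ((B k).filter (· = u)).card + ((B k).filter fun v => v k = 1 ∧ Pi.single k 1 = u).card := by
  have himage : ((word B k).map toNat).toFinset = (word B k).toFinset.image toNat := by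
    ext; simp
  rw [phrase, himage, Finset.filter_image, Finset.card_image_of_injective _ toNat_injective]
  simp only [List.count_map_of_injective _ _ toNat_injective]
  rw [← Finset.filter_filter, filter_count_word_eq_two, Finset.filter_union,
    Finset.card_union_of_disjoint
      (Finset.disjoint_filter_filter (by simp [Finset.disjoint_left])),
    Finset.filter_image, Finset.filter_image,
    Finset.card_image_of_injective _ fun _ _ h => (main.inj h).2,
    Finset.card_image_of_injective _ fun _ _ h => (parity.inj h).2, Finset.filter_filter]
  congr 1
  · exact congrArg _ (Finset.filter_congr fun v hv => by rw [letterVec_main hv])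
  · exact congrArg _ (Finset.filter_congr fun v hv =>
      and_congr_right fun hvk => by rw [letterVec_parity hv hvk])

theorem Bk_phrase {k : Fin n} (h0 : 0 ∉ B k) (hev : Even ((B k).filter fun v => v k = 1).card) :
    Bk (phrase B) k = B k := by
  ext u
  simp only [Bk, Finset.mem_filter, Finset.mem_univ, true_and]
  rw [card_filter_letterVec_phrase]
  have heven : Even ((B k).filter fun v => v k = 1 ∧ Pi.single k 1 = u).card := by
    by_cases h : Pi.single k 1 = u <;> simp [h, hev]
  rw [Nat.odd_add, iff_true_right heven, Finset.filter_eq']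
  by_cases hu : u ∈ B k
  · simp [hu, ne_of_mem_of_not_mem hu h0]
  · simp [hu]

end SoRealizable

/-- given, for each `k`, a subset `B_k` of `(ℤ/2)ⁿ \ {0}` with an even
number of `k`-odd vectors, there is a single Gauss phrase realizing all of them. -/
theorem So_realizable {n : ℕ} (B : Fin n → Finset (Fin n → ZMod 2))
    (h0 : ∀ k, (0 : Fin n → ZMod 2) ∉ B k)
    (hev : ∀ k, Even (((B k).filter fun v => v k = 1).card)) :
    ∃ p : Phrase n, IsGaussPhrase p ∧ ∀ k : Fin n, Bk p k = B k :=
  ⟨SoRealizable.phrase B, SoRealizable.isGaussPhrase_phrase,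
    fun k => SoRealizable.Bk_phrase (h0 k) (hev k)⟩
end
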